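/- arXiv:1606.09299 — 7 statements merged into one kernel-verified Lean document; each statement's English description precedes it below -/
import Mathlib

section
/- As formal power series over the rationals (or integers), 1 - qX equals the infinite product over n ≥ 1 of (1 - X^n) raised to the power |I(q)_n|, where |I(q)_n| is the number of monic irreducible polynomials of degree n over GF(q). -/
open Polynomial PowerSeries Finset

namespace OneSubQXAux

open UniqueFactorizationMonoid

set_option linter.unusedSectionVars false

variable (F : Type*) [Field F] [Fintype F] [DecidableEq F]

/-- Monic polynomials of a given degree form a finite set. -/
lemma finite_monicDeg (m : ℕ) : {f : F[X] | f.Monic ∧ f.natDegree = m}.Finite := by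
  apply Set.Finite.of_finite_image (f := fun f (i : Fin (m + 1)) => f.coeff (i : ℕ))
  · exact Set.toFinite _
  · intro f hf g hg h
    obtain ⟨hfm, hfd⟩ := hf
    obtain ⟨hgm, hgd⟩ := hg
    ext k
    by_cases hk : k ≤ m
    · exact congrFun h ⟨k, Nat.lt_succ_of_le hk⟩
    · rw [Polynomial.coeff_eq_zero_of_natDegree_lt (by omega),
        Polynomial.coeff_eq_zero_of_natDegree_lt (by omega)]

lemma finite_irrDeg (n : ℕ) :
    {p : F[X] | p.Monic ∧ Irreducible p ∧ p.natDegree = n}.Finite :=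
  (finite_monicDeg F n).subset fun p hp => ⟨hp.1, hp.2.2⟩

/-- The finset of monic polynomials of degree `m`. -/
noncomputable def M (m : ℕ) : Finset F[X] := (finite_monicDeg F m).toFinset

/-- The finset of monic irreducible polynomials of degree `n`. -/
noncomputable def In (n : ℕ) : Finset F[X] := (finite_irrDeg F n).toFinset

/-- The finset of monic irreducible polynomials of degree between 1 and `N`. -/
noncomputable def S (N : ℕ) : Finset F[X] := (Finset.Icc 1 N).biUnion (In F)

variable {F}

lemma mem_M {m : ℕ} {f : F[X]} : f ∈ M F m ↔ f.Monic ∧ f.natDegree = m := by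
  simp [M]

lemma mem_In {n : ℕ} {p : F[X]} :
    p ∈ In F n ↔ p.Monic ∧ Irreducible p ∧ p.natDegree = n := by
  simp [In]

lemma mem_S {N : ℕ} {p : F[X]} :
    p ∈ S F N ↔ p.Monic ∧ Irreducible p ∧ p.natDegree ∈ Finset.Icc 1 N := by
  simp only [S, Finset.mem_biUnion, mem_In]
  constructor
  · rintro ⟨n, hn, h1, h2, h3⟩
    exact ⟨h1, h2, h3 ▸ hn⟩
  · rintro ⟨h1, h2, h3⟩
    exact ⟨p.natDegree, h3, h1, h2, rfl⟩

/-- Number of monic polynomials of degree `m` is `q ^ m`. -/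
lemma card_M (m : ℕ) : (M F m).card = Fintype.card F ^ m := by
  classical
  have hpow : Fintype.card F ^ m = (Finset.univ : Finset (Fin m → F)).card := by
    simp [Fintype.card_fun]
  rw [hpow]
  have coeff_build : ∀ (g : Fin m → F) (k : ℕ),
      ((Polynomial.X : F[X]) ^ m
          + ∑ i : Fin m, Polynomial.C (g i) * Polynomial.X ^ (i : ℕ)).coeff k
        = (if k = m then 1 else 0) + (if h : k < m then g ⟨k, h⟩ else 0) := by
    intro g k
    rw [Polynomial.coeff_add, Polynomial.coeff_X_pow, Polynomial.finset_sum_coeff]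
    congr 1
    simp only [Polynomial.coeff_C_mul, Polynomial.coeff_X_pow]
    by_cases h : k < m
    · rw [dif_pos h, Finset.sum_eq_single (⟨k, h⟩ : Fin m)]
      · simp
      · intro b _ hb
        have hne : k ≠ (b : ℕ) := by
          intro hbk
          exact hb (by ext; simp [← hbk])
        simp [hne]
      · simp
    · rw [dif_neg h]
      apply Finset.sum_eq_zero
      intro b _
      have hne : k ≠ (b : ℕ) := by omega
      simp [hne]
  have hdeglt : ∀ g : Fin m → F,
      (∑ i : Fin m, Polynomial.C (g i) * Polynomial.X ^ (i : ℕ)).degree < (m : WithBot ℕ) := by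
    intro g
    refine lt_of_le_of_lt (Polynomial.degree_sum_le _ _) ?_
    by_cases hm : m = 0
    · subst hm; simp
    rw [Finset.sup_lt_iff (by exact_mod_cast WithBot.bot_lt_coe m)]
    intro b _
    refine lt_of_le_of_lt (Polynomial.degree_C_mul_X_pow_le _ _) ?_
    exact_mod_cast b.2
  have hmonic : ∀ g : Fin m → F,
      ((Polynomial.X : F[X]) ^ m
        + ∑ i : Fin m, Polynomial.C (g i) * Polynomial.X ^ (i : ℕ)).Monic :=
    fun g => Polynomial.monic_X_pow_add (hdeglt g)
  have hdeg : ∀ g : Fin m → F,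
      ((Polynomial.X : F[X]) ^ m
        + ∑ i : Fin m, Polynomial.C (g i) * Polynomial.X ^ (i : ℕ)).natDegree = m := by
    intro g
    have := Polynomial.degree_add_eq_left_of_degree_lt
      (p := (Polynomial.X : F[X]) ^ m)
      (q := ∑ i : Fin m, Polynomial.C (g i) * Polynomial.X ^ (i : ℕ))
      (by rw [Polynomial.degree_X_pow]; exact hdeglt g)
    rw [Polynomial.degree_X_pow] at this
    exact Polynomial.natDegree_eq_of_degree_eq_some this
  apply Finset.card_nbij' (fun f (i : Fin m) => f.coeff (i : ℕ))
    (fun g => (Polynomial.X : F[X]) ^ m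
      + ∑ i : Fin m, Polynomial.C (g i) * Polynomial.X ^ (i : ℕ))
  · intro f _; exact Finset.mem_univ _
  · intro g _
    exact mem_M.2 ⟨hmonic g, hdeg g⟩
  · intro f hf
    obtain ⟨hfm, hfd⟩ := mem_M.1 hf
    ext k
    rw [coeff_build]
    by_cases hk : k < m
    · simp [Nat.ne_of_lt hk, hk]
    · rw [dif_neg hk]
      by_cases hk2 : k = m
      · subst hk2
        have : f.coeff k = 1 := by
          have := hfm.leadingCoeff
          rwa [Polynomial.leadingCoeff, hfd] at this
        simp [this]
      · have : f.coeff k = 0 :=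
          Polynomial.coeff_eq_zero_of_natDegree_lt (by omega)
        simp [this, hk2]
  · intro g _
    funext i
    dsimp only; rw [coeff_build]
    simp [Nat.ne_of_lt i.2, i.2]

lemma prod_pow_ne_zero {s : Finset F[X]} (hs : ∀ p ∈ s, p.Monic) (a : F[X] → ℕ) :
    (∏ p ∈ s, p ^ a p) ≠ 0 :=
  (Polynomial.monic_prod_of_monic _ _ fun p hp => (hs p hp).pow _).ne_zero

/-- Normalized factors of a product of powers of distinct monic irreducibles. -/
lemma nf_prod_pow {s : Finset F[X]} (hs : ∀ p ∈ s, p.Monic ∧ Irreducible p) (a : F[X] → ℕ) :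
    normalizedFactors (∏ p ∈ s, p ^ a p) = ∑ p ∈ s, a p • ({p} : Multiset F[X]) := by
  classical
  induction s using Finset.induction_on with
  | empty => simp
  | @insert q s hq ih =>
    have hsq : ∀ p ∈ s, p.Monic ∧ Irreducible p := fun p hp => hs p (Finset.mem_insert_of_mem hp)
    have hqmi := hs q (Finset.mem_insert_self q s)
    rw [Finset.prod_insert hq, Finset.sum_insert hq,
      normalizedFactors_mul (pow_ne_zero _ hqmi.1.ne_zero)
        (prod_pow_ne_zero (fun p hp => (hsq p hp).1) a),
      hqmi.2.normalizedFactors_pow, hqmi.1.normalize_eq_self, ih hsq,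
      ← Multiset.nsmul_singleton]

lemma count_nf_prod_pow {s : Finset F[X]} (hs : ∀ p ∈ s, p.Monic ∧ Irreducible p)
    (a : F[X] → ℕ) {q : F[X]} :
    Multiset.count q (normalizedFactors (∏ p ∈ s, p ^ a p))
      = if q ∈ s then a q else 0 := by
  classical
  rw [nf_prod_pow hs a, Multiset.count_sum']
  by_cases hq : q ∈ s
  · rw [if_pos hq, Finset.sum_eq_single q]
    · simp
    · intro p _ hpq
      simp [Multiset.count_singleton, hpq.symm]
    · intro h; exact absurd hq h
  · rw [if_neg hq]
    apply Finset.sum_eq_zero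
    intro p hp
    have : q ≠ p := fun h => hq (h ▸ hp)
    simp [Multiset.count_singleton, this]

lemma mem_S_of_mem_nf {N m : ℕ} (hm : m ≤ N) {f : F[X]} (hf : f.Monic)
    (hdeg : f.natDegree = m) {p : F[X]} (hp : p ∈ normalizedFactors f) : p ∈ S F N := by
  have hirr := irreducible_of_normalized_factor p hp
  have hmon : p.Monic := by
    have hnp := normalize_normalized_factor p hp
    rw [← hnp]
    exact Polynomial.monic_normalize hirr.ne_zero
  refine mem_S.2 ⟨hmon, hirr, Finset.mem_Icc.2 ⟨hirr.natDegree_pos, ?_⟩⟩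
  calc p.natDegree ≤ f.natDegree :=
        Polynomial.natDegree_le_of_dvd (dvd_of_mem_normalizedFactors hp) hf.ne_zero
    _ ≤ N := by omega

lemma prod_nf_eq {f : F[X]} (hf : f.Monic) : (normalizedFactors f).prod = f := by
  have hprod : ((normalizedFactors f).map id).prod.Monic := by
    apply Polynomial.monic_multiset_prod_of_monic
    intro p hp
    have hnp := normalize_normalized_factor p hp
    rw [id_eq, ← hnp]
    exact Polynomial.monic_normalize (irreducible_of_normalized_factor p hp).ne_zero
  rw [Multiset.map_id] at hprod
  exact Polynomial.eq_of_monic_of_associated hprod hf (prod_normalizedFactors hf.ne_zero)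

/-- The key combinatorial count: divisible solutions of `∑ l p = m` over the
irreducibles of degree `≤ N` are in bijection with monic polynomials of degree `m`. -/
lemma card_filter_eq (N m : ℕ) (hm : m ≤ N) :
    (((S F N).finsuppAntidiag m).filter
        fun l => ∀ p ∈ S F N, p.natDegree ∣ l p).card = (M F m).card := by
  classical
  have hSmi : ∀ p ∈ S F N, p.Monic ∧ Irreducible p := fun p hp =>
    ⟨(mem_S.1 hp).1, (mem_S.1 hp).2.1⟩
  have hSd : ∀ p ∈ S F N, 0 < p.natDegree := fun p hp =>
    (Finset.mem_Icc.1 (mem_S.1 hp).2.2).1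
  apply Finset.card_nbij'
    (i := fun l => ∏ p ∈ S F N, p ^ (l p / p.natDegree))
    (j := fun f => Finsupp.onFinset (S F N)
      (fun p => if p ∈ S F N then Multiset.count p (normalizedFactors f) * p.natDegree else 0)
      (fun p h => by by_contra hp; simp [hp] at h))
  · -- maps into M
    intro l hl
    rw [Finset.mem_coe, Finset.mem_filter, Finset.mem_finsuppAntidiag] at hl
    obtain ⟨⟨hsum, hsupp⟩, hdvd⟩ := hl
    refine mem_M.2 ⟨Polynomial.monic_prod_of_monic _ _
      (fun p hp => ((hSmi p hp).1).pow _), ?_⟩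
    rw [Polynomial.natDegree_prod _ _ (fun p hp => ((hSmi p hp).1.pow _).ne_zero)]
    calc ∑ p ∈ S F N, (p ^ (l p / p.natDegree)).natDegree
        = ∑ p ∈ S F N, l p := by
          apply Finset.sum_congr rfl
          intro p hp
          rw [Polynomial.natDegree_pow, Nat.div_mul_cancel (hdvd p hp)]
      _ = m := hsum
  · -- j maps into filter
    intro f hf
    obtain ⟨hfm, hfd⟩ := mem_M.1 hf
    have hsub : (normalizedFactors f).toFinset ⊆ S F N := fun p hp =>
      mem_S_of_mem_nf hm hfm hfd (Multiset.mem_toFinset.1 hp)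
    rw [Finset.mem_coe, Finset.mem_filter, Finset.mem_finsuppAntidiag]
    refine ⟨⟨?_, fun p hp => ?_⟩, fun p hp => ?_⟩
    · -- sum = m
      calc (S F N).sum ⇑(Finsupp.onFinset (S F N)
            (fun p => if p ∈ S F N
              then Multiset.count p (normalizedFactors f) * p.natDegree else 0) _)
          = ∑ p ∈ S F N, Multiset.count p (normalizedFactors f) * p.natDegree := by
            apply Finset.sum_congr rfl
            intro p hp
            simp [Finsupp.onFinset_apply, hp]
        _ = ∑ p ∈ (normalizedFactors f).toFinset,
              Multiset.count p (normalizedFactors f) * p.natDegree := by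
            refine (Finset.sum_subset hsub fun p _ hp => ?_).symm
            rw [Multiset.count_eq_zero_of_notMem
              (fun h => hp (Multiset.mem_toFinset.2 h)), zero_mul]
        _ = ((normalizedFactors f).map Polynomial.natDegree).sum := by
            rw [Finset.sum_multiset_map_count]
            simp [smul_eq_mul]
        _ = (normalizedFactors f).prod.natDegree :=
            (Polynomial.natDegree_multiset_prod _
              (zero_notMem_normalizedFactors f)).symm
        _ = m := by rw [prod_nf_eq hfm, hfd]
    · -- support ⊆ S
      exact Finsupp.support_onFinset_subset hp
    · -- divisibility
      simp only [Finsupp.onFinset_apply, if_pos hp]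
      exact dvd_mul_left _ _
  · -- j (i l) = l
    intro l hl
    rw [Finset.mem_coe, Finset.mem_filter, Finset.mem_finsuppAntidiag] at hl
    obtain ⟨⟨hsum, hsupp⟩, hdvd⟩ := hl
    ext p
    rw [Finsupp.onFinset_apply]
    by_cases hp : p ∈ S F N
    · rw [if_pos hp, count_nf_prod_pow hSmi, if_pos hp,
        Nat.div_mul_cancel (hdvd p hp)]
    · rw [if_neg hp]
      exact (Finsupp.notMem_support_iff.1 (fun h => hp (hsupp h))).symm
  · -- i (j f) = f
    intro f hf
    obtain ⟨hfm, hfd⟩ := mem_M.1 hf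
    have hsub : (normalizedFactors f).toFinset ⊆ S F N := fun p hp =>
      mem_S_of_mem_nf hm hfm hfd (Multiset.mem_toFinset.1 hp)
    calc ∏ p ∈ S F N, p ^ ((Finsupp.onFinset (S F N)
          (fun p => if p ∈ S F N
            then Multiset.count p (normalizedFactors f) * p.natDegree else 0) _) p
          / p.natDegree)
        = ∏ p ∈ S F N, p ^ Multiset.count p (normalizedFactors f) := by
          apply Finset.prod_congr rfl
          intro p hp
          rw [Finsupp.onFinset_apply, if_pos hp, Nat.mul_div_cancel _ (hSd p hp)]
      _ = ∏ p ∈ (normalizedFactors f).toFinset,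
            p ^ Multiset.count p (normalizedFactors f) := by
          refine (Finset.prod_subset hsub fun p _ hp => ?_).symm
          rw [Multiset.count_eq_zero_of_notMem
            (fun h => hp (Multiset.mem_toFinset.2 h)), pow_zero]
      _ = (normalizedFactors f).prod := (Finset.prod_multiset_count _).symm
      _ = f := prod_nf_eq hfm

/-- Coefficient of the product of the "inverse" series. -/
lemma coeff_prod_inv (N m : ℕ) (hm : m ≤ N) :
    (PowerSeries.coeff m)
        (∏ p ∈ S F N, PowerSeries.mk fun k => if p.natDegree ∣ k then (1 : ℤ) else 0)
      = (Fintype.card F : ℤ) ^ m := by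
  classical
  rw [PowerSeries.coeff_prod]
  have h1 : ∀ l ∈ (S F N).finsuppAntidiag m,
      (∏ p ∈ S F N, (PowerSeries.coeff (l p))
          (PowerSeries.mk fun k => if p.natDegree ∣ k then (1 : ℤ) else 0))
        = if (∀ p ∈ S F N, p.natDegree ∣ l p) then (1 : ℤ) else 0 := by
    intro l _
    rw [← Finset.prod_boole]
    apply Finset.prod_congr rfl
    intro p _
    rw [PowerSeries.coeff_mk]
  rw [Finset.sum_congr rfl h1, Finset.sum_boole, card_filter_eq N m hm, card_M]
  push_cast
  ring

/-- `(1 - X^d)` is inverted by `∑_{d ∣ k} X^k`. -/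
lemma one_sub_X_pow_mul_inv (d : ℕ) (hd : 0 < d) :
    ((1 : PowerSeries ℤ) - PowerSeries.X ^ d)
        * (PowerSeries.mk fun k => if d ∣ k then (1 : ℤ) else 0) = 1 := by
  ext k
  rw [sub_mul, one_mul, map_sub, mul_comm, PowerSeries.coeff_mul_X_pow',
    PowerSeries.coeff_mk, PowerSeries.coeff_one]
  rcases Nat.eq_zero_or_pos k with hk | hk
  · subst hk
    simp only [Nat.dvd_zero, if_true]
    rw [if_neg (by omega), sub_zero]
  · rw [if_neg hk.ne']
    by_cases hdk : d ≤ k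
    · rw [if_pos hdk, PowerSeries.coeff_mk]
      have hiff : d ∣ k ↔ d ∣ k - d := by
        constructor
        · intro h; exact Nat.dvd_sub h dvd_rfl
        · intro h
          have h2 := Nat.dvd_add h (dvd_refl d)
          rwa [Nat.sub_add_cancel hdk] at h2
      by_cases h : d ∣ k
      · rw [if_pos h, if_pos (hiff.1 h), sub_self]
      · rw [if_neg h, if_neg (fun hh => h (hiff.2 hh)), sub_self]
    · rw [if_neg hdk]
      have hnd : ¬ d ∣ k := fun h => hdk (Nat.le_of_dvd hk h)
      rw [if_neg hnd, sub_zero]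

/-- `(1 - qX)` is inverted by `∑ q^k X^k`. -/
lemma one_sub_qX_mul_geom (q : ℤ) :
    ((1 : PowerSeries ℤ) - PowerSeries.C q * PowerSeries.X)
        * (PowerSeries.mk fun k => q ^ k) = 1 := by
  ext k
  rw [sub_mul, one_mul, map_sub, mul_assoc, PowerSeries.coeff_one]
  cases k with
  | zero => simp
  | succ n =>
    rw [PowerSeries.coeff_C_mul, PowerSeries.coeff_succ_X_mul, PowerSeries.coeff_mk,
      PowerSeries.coeff_mk]
    simp only [Nat.succ_ne_zero, if_false]
    ring

lemma trunc_eq_iff {n : ℕ} {U V : PowerSeries ℤ} :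
    PowerSeries.trunc n U = PowerSeries.trunc n V
      ↔ ∀ k < n, PowerSeries.coeff k U = PowerSeries.coeff k V := by
  constructor
  · intro h k hk
    have := congrArg (fun p => Polynomial.coeff p k) h
    simpa [PowerSeries.coeff_trunc, hk] using this
  · intro h
    apply Polynomial.ext
    intro k
    rw [PowerSeries.coeff_trunc, PowerSeries.coeff_trunc]
    by_cases hk : k < n
    · rw [if_pos hk, if_pos hk, h k hk]
    · rw [if_neg hk, if_neg hk]

lemma trunc_mul_congr {n : ℕ} {U V C : PowerSeries ℤ}
    (h : PowerSeries.trunc n U = PowerSeries.trunc n V) :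
    PowerSeries.trunc n (U * C) = PowerSeries.trunc n (V * C) := by
  rw [trunc_eq_iff] at h ⊢
  intro k hk
  rw [PowerSeries.coeff_mul, PowerSeries.coeff_mul]
  apply Finset.sum_congr rfl
  intro p hp
  rw [Finset.HasAntidiagonal.mem_antidiagonal] at hp
  rw [h p.1 (by omega)]

end OneSubQXAux

open OneSubQXAux UniqueFactorizationMonoid in
/-- As formal power series (interpreted via truncation to every finite order),
`1 - q X = ∏_{n ≥ 1} (1 - X^n) ^ |I(q)_n|`, where `|I(q)_n|` is the number of
monic irreducible polynomials of degree `n` over `GF(q)` (here `q` is the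
cardinality of a finite field `F`). -/
theorem one_sub_qX_eq_prod_irreducible (F : Type*) [Field F] [Fintype F] (N : ℕ) :
    PowerSeries.trunc (N + 1)
        ((1 : PowerSeries ℤ) - (Fintype.card F : ℤ) • PowerSeries.X)
      = PowerSeries.trunc (N + 1)
        (∏ n ∈ Finset.Icc 1 N,
          ((1 : PowerSeries ℤ) - PowerSeries.X ^ n) ^
            {p : Polynomial F | p.Monic ∧ Irreducible p ∧ p.natDegree = n}.ncard) := by
  classical
  set q : ℤ := (Fintype.card F : ℤ) with hq
  have hsmul : (q • PowerSeries.X : PowerSeries ℤ) = PowerSeries.C q * PowerSeries.X := by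
    exact PowerSeries.smul_eq_C_mul _ _
  have hncard : ∀ n : ℕ,
      {p : Polynomial F | p.Monic ∧ Irreducible p ∧ p.natDegree = n}.ncard = (In F n).card := by
    intro n
    rw [Set.ncard_eq_toFinset_card _ (finite_irrDeg F n)]
    rfl
  have hstep1 : (∏ n ∈ Finset.Icc 1 N,
      ((1 : PowerSeries ℤ) - PowerSeries.X ^ n) ^
        {p : Polynomial F | p.Monic ∧ Irreducible p ∧ p.natDegree = n}.ncard)
      = ∏ p ∈ S F N, ((1 : PowerSeries ℤ) - PowerSeries.X ^ p.natDegree) := by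
    rw [S, Finset.prod_biUnion]
    · apply Finset.prod_congr rfl
      intro n _
      rw [hncard n, ← Finset.prod_const]
      apply Finset.prod_congr rfl
      intro p hp
      rw [(mem_In.1 hp).2.2]
    · intro a _ b _ hab
      simp only [Function.onFun]
      rw [Finset.disjoint_left]
      intro p hpa hpb
      exact hab ((mem_In.1 hpa).2.2 ▸ (mem_In.1 hpb).2.2.symm ▸ rfl)
  rw [hstep1, hsmul]
  set A : PowerSeries ℤ :=
    ∏ p ∈ S F N, ((1 : PowerSeries ℤ) - PowerSeries.X ^ p.natDegree) with hA
  set B : PowerSeries ℤ :=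
    ∏ p ∈ S F N, PowerSeries.mk fun k => if p.natDegree ∣ k then (1 : ℤ) else 0 with hB
  set G : PowerSeries ℤ := PowerSeries.mk fun k => q ^ k with hG'
  have hAB : A * B = 1 := by
    rw [hA, hB, ← Finset.prod_mul_distrib]
    apply Finset.prod_eq_one
    intro p hp
    exact one_sub_X_pow_mul_inv p.natDegree (Finset.mem_Icc.1 (mem_S.1 hp).2.2).1
  have hG : ((1 : PowerSeries ℤ) - PowerSeries.C q * PowerSeries.X) * G = 1 :=
    one_sub_qX_mul_geom q
  have hBG : PowerSeries.trunc (N + 1) B = PowerSeries.trunc (N + 1) G := by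
    rw [trunc_eq_iff]
    intro k hk
    rw [hB, hG', coeff_prod_inv N k (by omega), PowerSeries.coeff_mk]
  calc PowerSeries.trunc (N + 1) ((1 : PowerSeries ℤ) - PowerSeries.C q * PowerSeries.X)
      = PowerSeries.trunc (N + 1)
        (((1 : PowerSeries ℤ) - PowerSeries.C q * PowerSeries.X) * (A * B)) := by
        rw [hAB, mul_one]
    _ = PowerSeries.trunc (N + 1)
        (B * (((1 : PowerSeries ℤ) - PowerSeries.C q * PowerSeries.X) * A)) := by
        ring_nf
    _ = PowerSeries.trunc (N + 1)
        (G * (((1 : PowerSeries ℤ) - PowerSeries.C q * PowerSeries.X) * A)) :=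
        trunc_mul_congr hBG
    _ = PowerSeries.trunc (N + 1)
        ((((1 : PowerSeries ℤ) - PowerSeries.C q * PowerSeries.X) * G) * A) := by
        ring_nf
    _ = PowerSeries.trunc (N + 1) A := by rw [hG, one_mul]
end

section
/- Let q be a power of 2, r a positive integer, and φ a monic irreducible polynomial over GF(q). Then the square of the companion matrix M(φ(X)^r) is similar over GF(q) to the direct sum M(φ^{(2)}(X)^{⌈r/2⌉}) ⊕ M(φ^{(2)}(X)^{⌊r/2⌋}), where φ^{(2)} is the monic polynomial whose roots are the squares of the roots of φ. -/
open Polynomial Matrix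

/-- The companion matrix of a monic polynomial. -/
def companion {K : Type*} [Field K] (φ : Polynomial K) :
    Matrix (Fin φ.natDegree) (Fin φ.natDegree) K :=
  fun i j =>
    if (i : ℕ) + 1 = (j : ℕ) then 1
    else if (i : ℕ) = φ.natDegree - 1 then -φ.coeff (j : ℕ) else 0

/-- Similarity of square matrices over possibly different (equinumerous) index types. -/
def MatrixSimilar {K : Type*} [Field K] {m n : Type*} [Fintype m] [Fintype n]
    [DecidableEq m] [DecidableEq n] (A : Matrix m m K) (B : Matrix n n K) : Prop :=
  ∃ e : m ≃ n, ∃ U : Matrix n n K, IsUnit U.det ∧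
    Matrix.reindex e e A = U⁻¹ * B * U

section Aux

variable {F : Type*} [Field F]

lemma MatrixSimilar.of_transpose {m n : Type*} [Fintype m] [Fintype n]
    [DecidableEq m] [DecidableEq n] {A : Matrix m m F} {B : Matrix n n F}
    (h : MatrixSimilar Aᵀ Bᵀ) : MatrixSimilar A B := by
  obtain ⟨e, U, hU, hconj⟩ := h
  refine ⟨e, (Uᵀ)⁻¹, ?_, ?_⟩
  · rw [Matrix.det_nonsing_inv, Matrix.det_transpose]
    exact (isUnit_ringInverse).mpr hU
  · have h2 := congrArg Matrix.transpose hconj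
    simp only [Matrix.transpose_reindex, Matrix.transpose_transpose, Matrix.transpose_mul,
      Matrix.transpose_nonsing_inv] at h2
    rw [Matrix.nonsing_inv_nonsing_inv _ (by rwa [Matrix.det_transpose])]
    rw [h2, Matrix.mul_assoc]

lemma similar_toMatrix {V : Type*} [AddCommGroup V] [Module F V]
    {m n : Type*} [Fintype m] [Fintype n] [DecidableEq m] [DecidableEq n]
    (bm : Module.Basis m F V) (bn : Module.Basis n F V) (f : V →ₗ[F] V) :
    MatrixSimilar (LinearMap.toMatrix bm bm f) (LinearMap.toMatrix bn bn f) := by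
  let e : m ≃ n := bm.indexEquiv bn
  let b' : Module.Basis n F V := bm.reindex e
  have h1 : b'.toMatrix bn * bn.toMatrix b' = 1 := Module.Basis.toMatrix_mul_toMatrix_flip _ _
  have h2 : bn.toMatrix b' * b'.toMatrix bn = 1 := Module.Basis.toMatrix_mul_toMatrix_flip _ _
  refine ⟨e, bn.toMatrix b', Matrix.isUnit_det_of_right_inverse h2, ?_⟩
  have hinv : (bn.toMatrix b')⁻¹ = b'.toMatrix bn := Matrix.inv_eq_left_inv h1
  rw [hinv]
  have hre : Matrix.reindex e e (LinearMap.toMatrix bm bm f) = LinearMap.toMatrix b' b' f := by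
    ext i j
    rw [Matrix.reindex_apply, Matrix.submatrix_apply, LinearMap.toMatrix_apply,
      LinearMap.toMatrix_apply, Module.Basis.repr_reindex_apply]
    congr 1
    simp [b']
  rw [hre, ← basis_toMatrix_mul_linearMap_toMatrix_mul_basis_toMatrix b' bn b' bn f]

lemma toMatrix_eq {V : Type*} [AddCommGroup V] [Module F V]
    {ι : Type*} [Fintype ι] [DecidableEq ι] (b : Module.Basis ι F V) (f : V →ₗ[F] V)
    (M : Matrix ι ι F) (h : ∀ j, f (b j) = ∑ i, M i j • b i) :
    LinearMap.toMatrix b b f = M := by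
  have : f = Matrix.toLin b b M := b.ext fun j => by rw [Matrix.toLin_self]; exact h j
  rw [this, LinearMap.toMatrix_toLin]

lemma companion_col {V : Type*} [AddCommGroup V] [Module F V]
    (ψ : Polynomial F) (hψ : ψ.Monic) (v : ℕ → V) (f : V →ₗ[F] V)
    (hv : ∀ i, f (v i) = v (i + 1))
    (hrel : ∑ i ∈ Finset.range (ψ.natDegree + 1), ψ.coeff i • v i = 0)
    (j : Fin ψ.natDegree) :
    f (v j) = ∑ i : Fin ψ.natDegree, (companion ψ)ᵀ i j • v i := by
  rw [hv]
  by_cases hj : (j : ℕ) + 1 = ψ.natDegree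
  · have hvn : v ψ.natDegree = -∑ i ∈ Finset.range ψ.natDegree, ψ.coeff i • v i := by
      rw [Finset.sum_range_succ, hψ.coeff_natDegree, one_smul] at hrel
      exact eq_neg_of_add_eq_zero_right hrel
    rw [hj, hvn, ← Fin.sum_univ_eq_sum_range (fun i => ψ.coeff i • v i), ← Finset.sum_neg_distrib]
    apply Finset.sum_congr rfl
    intro i _
    have h1 : ¬ ((j : ℕ) + 1 = (i : ℕ)) := by have := i.isLt; omega
    have h2 : (j : ℕ) = ψ.natDegree - 1 := by have := j.isLt; omega
    simp only [companion, Matrix.transpose_apply, if_neg h1, if_pos h2, neg_smul]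
  · have hjlt := j.isLt
    have h2 : ¬ ((j : ℕ) = ψ.natDegree - 1) := by omega
    have key : ∀ i : Fin ψ.natDegree, (companion ψ)ᵀ i j • v i =
        if i = (⟨(j : ℕ) + 1, by omega⟩ : Fin ψ.natDegree) then v ((j : ℕ) + 1) else 0 := by
      intro i
      by_cases hi : i = (⟨(j : ℕ) + 1, by omega⟩ : Fin ψ.natDegree)
      · subst hi
        simp [companion, Matrix.transpose_apply]
      · have hne : ¬ ((j : ℕ) + 1 = (i : ℕ)) := fun hc => hi (Fin.ext hc.symm)
        simp [companion, Matrix.transpose_apply, hne, h2, hi]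
    rw [Finset.sum_congr rfl (fun i _ => key i)]
    simp

end Aux

section PolyAux

variable {F : Type*} [Field F]

lemma exists_even_odd (p : Polynomial F) :
    ∃ pe po : Polynomial F, p = expand F 2 pe + X * expand F 2 po := by
  induction p using Polynomial.induction_on' with
  | add p q hp hq =>
    obtain ⟨pa, pb, hp⟩ := hp
    obtain ⟨qa, qb, hq⟩ := hq
    exact ⟨pa + qa, pb + qb, by rw [map_add, map_add, hp, hq]; ring⟩
  | monomial n a =>
    rw [← C_mul_X_pow_eq_monomial]
    rcases Nat.even_or_odd n with ⟨m, hm⟩ | ⟨m, hm⟩ <;> subst hm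
    · refine ⟨C a * X ^ m, 0, ?_⟩
      rw [_root_.map_mul, expand_C, map_pow, expand_X, map_zero, mul_zero, add_zero]
      ring
    · refine ⟨0, C a * X ^ m, ?_⟩
      rw [_root_.map_mul, expand_C, map_pow, expand_X, map_zero, zero_add]
      ring

lemma not_dvd_even_part [Fintype F] [CharP F 2] {φ E O : Polynomial F}
    (hφ : Irreducible φ) (hφm : φ.Monic) (hφX : φ ≠ X)
    (hsum : φ = expand F 2 E + X * expand F 2 O) : ¬ φ ∣ expand F 2 E := by
  haveI : ExpChar F 2 := ExpChar.prime Nat.prime_two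
  intro hdvd
  have hsq : ∀ q : Polynomial F, ∃ g : Polynomial F, expand F 2 q = g ^ 2 := by
    intro q
    refine ⟨q.map ((frobeniusEquiv F 2).symm : F ≃+* F), ?_⟩
    have h1 : (q.map ((frobeniusEquiv F 2).symm : F ≃+* F)).map (frobenius F 2) = q := by
      rw [Polynomial.map_map]
      have : (frobenius F 2).comp ((frobeniusEquiv F 2).symm : F ≃+* F) = RingHom.id F := by
        ext a
        exact (frobeniusEquiv F 2).apply_symm_apply a
      rw [this, Polynomial.map_id]
    conv_lhs => rw [← h1]
    rw [← Polynomial.map_expand, map_frobenius_expand]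
  obtain ⟨g, hg⟩ := hsq E
  obtain ⟨h, hh⟩ := hsq O
  have hprime : Prime φ := hφ.prime
  have hφX' : ¬ φ ∣ X := by
    intro hdX
    exact hφX (Polynomial.eq_of_monic_of_associated hφm monic_X
      (hφ.associated_of_dvd irreducible_X hdX))
  have hXO : φ ∣ X * expand F 2 O := by
    have : X * expand F 2 O = φ - expand F 2 E := by rw [hsum]; ring
    rw [this]
    exact dvd_sub (dvd_refl φ) hdvd
  have hO : φ ∣ h := by
    rcases (hprime.dvd_mul.mp (hh ▸ hXO)) with h1 | h1
    · exact absurd h1 hφX'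
    · exact hprime.dvd_of_dvd_pow h1
  have hE : φ ∣ g := hprime.dvd_of_dvd_pow (hg ▸ hdvd)
  have hsq2 : φ ^ 2 ∣ φ := by
    have h1 : φ ^ 2 ∣ g ^ 2 := pow_dvd_pow_of_dvd hE 2
    have h2 : φ ^ 2 ∣ X * h ^ 2 := Dvd.dvd.mul_left (pow_dvd_pow_of_dvd hO 2) X
    calc φ ^ 2 ∣ g ^ 2 + X * h ^ 2 := dvd_add h1 h2
    _ = φ := by rw [hsum, hg, hh]
  have hd1 : 0 < φ.natDegree := hφ.natDegree_pos
  have := Polynomial.natDegree_le_of_dvd hsq2 hφ.ne_zero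
  rw [Polynomial.natDegree_pow] at this
  omega

end PolyAux

/-- Let `F = GF(q)` with `q` a power of `2` (a finite field of characteristic 2),
`r ≥ 1`, and `φ` a monic irreducible polynomial over `F`.  Then
`M(φ^r)^2 ∼ M(φ^{(2)}^{⌈r/2⌉}) ⊕ M(φ^{(2)}^{⌊r/2⌋})`, where `φ^{(2)} = φ.map (frobenius F 2)`
is the monic polynomial whose roots are the squares of the roots of `φ`. -/
theorem companion_pow_sq_similar {F : Type*} [Field F] [Fintype F] [CharP F 2]
    (r : ℕ) (hr : 0 < r) (φ : Polynomial F) (hφm : φ.Monic) (hφ : Irreducible φ) :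
    MatrixSimilar ((companion (φ ^ r)) ^ 2)
      (Matrix.fromBlocks
        (companion ((φ.map (frobenius F 2)) ^ ((r + 1) / 2))) 0 0
        (companion ((φ.map (frobenius F 2)) ^ (r / 2)))) := by
  classical
  set ψ := φ.map (frobenius F 2) with hψdef
  set a := (r + 1) / 2 with ha
  set b := r / 2 with hb
  have hψm : ψ.Monic := hφm.map _
  have hψdeg : ψ.natDegree = φ.natDegree := hφm.natDegree_map _
  set x := AdjoinRoot.root (φ ^ r) with hxdef
  have hx : aeval x (φ ^ r) = 0 := by
    rw [hxdef, AdjoinRoot.aeval_eq]; exact AdjoinRoot.mk_self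
  have hpow : ∀ k, r ≤ k → (aeval x φ) ^ k = 0 := by
    intro k hk
    have h1 : (aeval x φ) ^ k = (aeval x φ) ^ r * (aeval x φ) ^ (k - r) := by
      rw [← pow_add]; congr 1; omega
    rw [h1, ← map_pow, hx, zero_mul]
  have hψ2 : aeval (x ^ 2) ψ = (aeval x φ) ^ 2 := by
    have hexp : expand F 2 ψ = φ ^ 2 := by
      rw [hψdef, ← Polynomial.map_expand, map_frobenius_expand]
    rw [← expand_aeval, hexp, map_pow]
  have hψa0 : aeval (x ^ 2) (ψ ^ a) = 0 := by
    rw [map_pow, hψ2, ← pow_mul]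
    exact hpow _ (by omega)
  -- choose the second generator g₂
  have hspanx : ∀ k : ℕ, ∃ p q : Polynomial F,
      x ^ k = aeval (x ^ 2) p + aeval (x ^ 2) q * x := by
    intro k
    rcases Nat.even_or_odd k with ⟨n, hn⟩ | ⟨n, hn⟩ <;> subst hn
    · exact ⟨X ^ n, 0, by simp only [aeval_X_pow, map_zero, zero_mul, add_zero]; ring⟩
    · exact ⟨0, X ^ n, by simp only [aeval_X_pow, map_zero, zero_add]; ring⟩
  obtain ⟨g₂, hψbg, hspan⟩ : ∃ g₂ : AdjoinRoot (φ ^ r),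
      aeval (x ^ 2) (ψ ^ b) * g₂ = 0 ∧ ∀ k : ℕ, ∃ p q : Polynomial F,
        x ^ k = aeval (x ^ 2) p + aeval (x ^ 2) q * g₂ := by
    rcases Nat.even_or_odd r with ⟨m, hm⟩ | ⟨m, hm⟩
    · refine ⟨x, ?_, hspanx⟩
      rw [map_pow, hψ2, ← pow_mul, hpow _ (by omega), zero_mul]
    · by_cases hφX : φ = X
      · refine ⟨x, ?_, hspanx⟩
        have hψX : ψ = X := by rw [hψdef, hφX, map_X]
        have hxr : x ^ r = 0 := by
          have h0 : x ^ r = aeval x ((X : Polynomial F) ^ r) := by rw [aeval_X_pow]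
          rw [h0, ← hφX]
          exact hx
        rw [hψX, map_pow, aeval_X, ← pow_mul, ← pow_succ]
        have h2 : 2 * b + 1 = r := by omega
        rw [h2, hxr]
      · refine ⟨aeval x φ * x, ?_, ?_⟩
        · rw [map_pow, hψ2, ← pow_mul, ← mul_assoc, ← pow_succ, hpow _ (by omega), zero_mul]
        · obtain ⟨E, O, hEO⟩ := exists_even_odd φ
          have hnd := not_dvd_even_part hφ hφm hφX hEO
          have hco : IsCoprime (expand F 2 E) (φ ^ r) :=
            ((hφ.coprime_iff_not_dvd).mpr hnd).symm.pow_right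
          obtain ⟨s, t, hst⟩ := hco
          obtain ⟨se, so, hsEO⟩ := exists_even_odd s
          have h1 : (aeval (x ^ 2) se + x * aeval (x ^ 2) so) * aeval (x ^ 2) E = 1 := by
            have h0 := congrArg (aeval x) hst
            rw [map_add, _root_.map_mul, _root_.map_mul, expand_aeval, hx, mul_zero, add_zero,
              _root_.map_one] at h0
            rw [← h0]
            congr 1
            rw [hsEO, map_add, _root_.map_mul, aeval_X, expand_aeval, expand_aeval]
          have hφxeq : aeval x φ = aeval (x ^ 2) E + x * aeval (x ^ 2) O := by
            have h0 := congrArg (aeval x) hEO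
            rw [map_add, _root_.map_mul, aeval_X, expand_aeval, expand_aeval] at h0
            exact h0
          have hxrep : x = aeval (x ^ 2) (so * E * X - se * O * X)
              + aeval (x ^ 2) se * (aeval x φ * x) := by
            rw [hφxeq]
            simp only [map_sub, _root_.map_mul, aeval_X]
            linear_combination (-x) * h1
          intro k
          rcases Nat.even_or_odd k with ⟨n, hn⟩ | ⟨n, hn⟩ <;> subst hn
          · exact ⟨X ^ n, 0, by simp only [aeval_X_pow, map_zero, zero_mul, add_zero]; ring⟩
          · refine ⟨X ^ n * (so * E * X - se * O * X), X ^ n * se, ?_⟩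
            have h3 := congrArg (fun z => (x ^ 2) ^ n * z) hxrep
            calc x ^ (2 * n + 1) = (x ^ 2) ^ n * x := by ring
            _ = (x ^ 2) ^ n * (aeval (x ^ 2) (so * E * X - se * O * X)
                + aeval (x ^ 2) se * (aeval x φ * x)) := h3
            _ = _ := by rw [_root_.map_mul, _root_.map_mul, aeval_X_pow]; ring
  -- reduction of `aeval` to a finite span
  have keyred : ∀ (g : Polynomial F), g.Monic → ∀ (z c : AdjoinRoot (φ ^ r)),
      aeval z g * c = 0 → ∀ p : Polynomial F,
      aeval z p * c ∈ Submodule.span F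
        (Set.range (fun i : Fin g.natDegree => z ^ (i : ℕ) * c)) := by
    intro g hg z c hzc p
    by_cases hone : g = 1
    · have hc0 : c = 0 := by simpa [hone] using hzc
      simp [hc0]
    · have hdeg : (p %ₘ g).natDegree < g.natDegree := natDegree_modByMonic_lt p hg hone
      have heq : aeval z p * c = aeval z (p %ₘ g) * c := by
        conv_lhs => rw [← modByMonic_add_div p g]
        rw [map_add, _root_.map_mul, add_mul,
          show aeval z g * aeval z (p /ₘ g) * c = aeval z (p /ₘ g) * (aeval z g * c) by ring,
          hzc, mul_zero, add_zero]
      rw [heq, aeval_eq_sum_range' hdeg, Finset.sum_mul]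
      simp only [smul_mul_assoc]
      exact Submodule.sum_mem _ fun i hi => Submodule.smul_mem _ _
        (Submodule.subset_span ⟨⟨i, Finset.mem_range.mp hi⟩, rfl⟩)
  -- the two spanning families
  set u : (Fin (ψ ^ a).natDegree ⊕ Fin (ψ ^ b).natDegree) → AdjoinRoot (φ ^ r) :=
    Sum.elim (fun i => x ^ (2 * (i : ℕ))) (fun i => x ^ (2 * (i : ℕ)) * g₂) with hu
  set w : Fin ((φ ^ r).natDegree) → AdjoinRoot (φ ^ r) := fun i => x ^ (i : ℕ) with hw
  have hfr : Module.finrank F (AdjoinRoot (φ ^ r)) = (φ ^ r).natDegree :=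
    (AdjoinRoot.powerBasis' (hφm.pow r)).finrank
  have hxk_mem : ∀ k : ℕ, x ^ k ∈ Submodule.span F (Set.range u) := by
    intro k
    obtain ⟨p, q, hpq⟩ := hspan k
    rw [hpq]
    refine Submodule.add_mem _ ?_ ?_
    · have h1 := keyred (ψ ^ a) (hψm.pow a) (x ^ 2) 1 (by rw [hψa0, zero_mul]) p
      have h2 : (Set.range (fun i : Fin (ψ ^ a).natDegree => (x ^ 2) ^ (i : ℕ) * 1))
          ⊆ Set.range u := by
        rintro _ ⟨i, rfl⟩
        exact ⟨Sum.inl i, by simp [hu, mul_one, ← pow_mul]⟩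
      have h3 := Submodule.span_mono h2 h1
      simpa [mul_one] using h3
    · have h1 := keyred (ψ ^ b) (hψm.pow b) (x ^ 2) g₂ hψbg q
      have h2 : (Set.range (fun i : Fin (ψ ^ b).natDegree => (x ^ 2) ^ (i : ℕ) * g₂))
          ⊆ Set.range u := by
        rintro _ ⟨i, rfl⟩
        exact ⟨Sum.inr i, by simp [hu, ← pow_mul]⟩
      exact Submodule.span_mono h2 h1
  have hspan_u : ⊤ ≤ Submodule.span F (Set.range u) := by
    rintro v -
    obtain ⟨P, rfl⟩ := AdjoinRoot.mk_surjective v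
    rw [← AdjoinRoot.aeval_eq, ← hxdef, aeval_eq_sum_range]
    exact Submodule.sum_mem _ fun k _ => Submodule.smul_mem _ _ (hxk_mem k)
  have hspan_w : ⊤ ≤ Submodule.span F (Set.range w) := by
    rintro v -
    obtain ⟨P, rfl⟩ := AdjoinRoot.mk_surjective v
    rw [← AdjoinRoot.aeval_eq, ← hxdef, aeval_eq_sum_range]
    refine Submodule.sum_mem _ fun k _ => Submodule.smul_mem _ _ ?_
    have h1 := keyred (φ ^ r) (hφm.pow r) x 1 (by rw [hx, zero_mul]) (X ^ k)
    have h2 : (Set.range (fun i : Fin (φ ^ r).natDegree => x ^ (i : ℕ) * 1))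
        ⊆ Set.range w := by
      rintro _ ⟨i, rfl⟩
      exact ⟨i, by simp [hw, mul_one]⟩
    have h3 := Submodule.span_mono h2 h1
    simpa [mul_one, aeval_X_pow] using h3
  have hcard_u : Fintype.card (Fin (ψ ^ a).natDegree ⊕ Fin (ψ ^ b).natDegree)
      = Module.finrank F (AdjoinRoot (φ ^ r)) := by
    rw [hfr, Fintype.card_sum, Fintype.card_fin, Fintype.card_fin, natDegree_pow, natDegree_pow,
      natDegree_pow, hψdeg, ← add_mul]
    congr 1
    omega
  have hcard_w : Fintype.card (Fin ((φ ^ r).natDegree))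
      = Module.finrank F (AdjoinRoot (φ ^ r)) := by
    rw [Fintype.card_fin, hfr]
  let cb : Module.Basis (Fin (ψ ^ a).natDegree ⊕ Fin (ψ ^ b).natDegree) F (AdjoinRoot (φ ^ r)) :=
    basisOfTopLeSpanOfCardEqFinrank u hspan_u hcard_u
  let wb : Module.Basis (Fin ((φ ^ r).natDegree)) F (AdjoinRoot (φ ^ r)) :=
    basisOfTopLeSpanOfCardEqFinrank w hspan_w hcard_w
  have hcb : ⇑cb = u := coe_basisOfTopLeSpanOfCardEqFinrank u hspan_u hcard_u
  have hwb : ⇑wb = w := coe_basisOfTopLeSpanOfCardEqFinrank w hspan_w hcard_w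
  -- matrix of multiplication by x in the power basis
  have hM1 : LinearMap.toMatrix wb wb (LinearMap.mulLeft F x) = (companion (φ ^ r))ᵀ := by
    refine toMatrix_eq wb _ _ fun j => ?_
    simp only [hwb, hw]
    refine companion_col (φ ^ r) (hφm.pow r) (fun i => x ^ i) _ (fun i => ?_) ?_ j
    · rw [LinearMap.mulLeft_apply, ← pow_succ']
    · rw [← Polynomial.aeval_eq_sum_range]
      exact hx
  have hM1sq : ((companion (φ ^ r))ᵀ) * ((companion (φ ^ r))ᵀ)
      = LinearMap.toMatrix wb wb (LinearMap.mulLeft F (x ^ 2)) := by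
    rw [← hM1, ← LinearMap.toMatrix_comp wb wb wb, ← LinearMap.mulLeft_mul, ← pow_two]
  -- matrix of multiplication by x^2 in the block basis
  have hrel1 : ∑ i ∈ Finset.range ((ψ ^ a).natDegree + 1), (ψ ^ a).coeff i • x ^ (2 * i) = 0 := by
    have h0 := hψa0
    rw [Polynomial.aeval_eq_sum_range] at h0
    simpa only [← pow_mul] using h0
  have hrel2 : ∑ i ∈ Finset.range ((ψ ^ b).natDegree + 1),
      (ψ ^ b).coeff i • (x ^ (2 * i) * g₂) = 0 := by
    have h0 := hψbg
    rw [Polynomial.aeval_eq_sum_range, Finset.sum_mul] at h0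
    simpa only [smul_mul_assoc, ← pow_mul] using h0
  have hM2 : LinearMap.toMatrix cb cb (LinearMap.mulLeft F (x ^ 2))
      = fromBlocks (companion (ψ ^ a))ᵀ 0 0 (companion (ψ ^ b))ᵀ := by
    refine toMatrix_eq cb _ _ fun j => ?_
    simp only [hcb, hu]
    cases j with
    | inl j =>
      rw [Fintype.sum_sum_type]
      simp only [Matrix.fromBlocks_apply₁₁, Matrix.fromBlocks_apply₂₁, Matrix.zero_apply,
        zero_smul, Finset.sum_const_zero, add_zero, Sum.elim_inl, Sum.elim_inr]
      refine companion_col (ψ ^ a) (hψm.pow a) (fun k => x ^ (2 * k)) _ (fun k => ?_) hrel1 j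
      simp only [LinearMap.mulLeft_apply]
      ring
    | inr j =>
      rw [Fintype.sum_sum_type]
      simp only [Matrix.fromBlocks_apply₁₂, Matrix.fromBlocks_apply₂₂, Matrix.zero_apply,
        zero_smul, Finset.sum_const_zero, zero_add, Sum.elim_inl, Sum.elim_inr]
      refine companion_col (ψ ^ b) (hψm.pow b) (fun k => x ^ (2 * k) * g₂) _
        (fun k => ?_) hrel2 j
      simp only [LinearMap.mulLeft_apply]
      ring
  -- conclusion
  apply MatrixSimilar.of_transpose
  have hT1 : ((companion (φ ^ r)) ^ 2)ᵀ
      = LinearMap.toMatrix wb wb (LinearMap.mulLeft F (x ^ 2)) := by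
    rw [Matrix.transpose_pow, pow_two]
    exact hM1sq
  have hT2 : (Matrix.fromBlocks (companion (ψ ^ a)) 0 0 (companion (ψ ^ b)))ᵀ
      = LinearMap.toMatrix cb cb (LinearMap.mulLeft F (x ^ 2)) := by
    rw [Matrix.fromBlocks_transpose, hM2]
    simp
  rw [hT1, hT2]
  exact similar_toMatrix wb cb _
end

section
/- Every semisimple matrix A over GF(2^n) is the square of some matrix over GF(2^n). Specifically, A^{2^{n-1}} squares to A^{2^n} which is similar to A, hence A itself is a square in Mat_m(GF(2^n)). -/
open Matrix Polynomial

section helpers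

variable {R S : Type*} [CommRing R] [CommRing S] [Algebra R S] {m : ℕ}

lemma aeval_diagonal_helper (d : Fin m → S) (p : R[X]) :
    aeval (Matrix.diagonal d) p = Matrix.diagonal (fun i => aeval (d i) p) := by
  induction p using Polynomial.induction_on with
  | C a =>
      ext i j
      simp [aeval_C, Matrix.algebraMap_eq_diagonal, Matrix.diagonal_apply]
  | add p q hp hq =>
      simp [map_add, hp, hq, Matrix.diagonal_add]
  | monomial a k hk =>
      ext i j
      by_cases h : i = j <;>
        simp [Matrix.algebraMap_eq_diagonal, Matrix.diagonal_pow,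
          Matrix.diagonal_mul_diagonal, Matrix.diagonal_apply, h, Pi.algebraMap_apply]

lemma aeval_conj_helper {A : Type*} [Ring A] [Algebra R A]
    (U V x : A) (hUV : U * V = 1) (hVU : V * U = 1) (p : R[X]) :
    aeval (V * x * U) p = V * aeval x p * U := by
  let e : A →ₐ[R] A :=
    { toFun := fun y => V * y * U
      map_one' := by show V * 1 * U = 1; rw [mul_one, hVU]
      map_mul' := by
        intro a b
        show V * (a * b) * U = (V * a * U) * (V * b * U)
        simp only [mul_assoc]
        rw [← mul_assoc U V, hUV, one_mul]
      map_zero' := by show V * 0 * U = 0; simp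
      map_add' := by
        intro a b
        show V * (a + b) * U = V * a * U + V * b * U
        rw [mul_add, add_mul]
      commutes' := by
        intro r
        show V * algebraMap R A r * U = algebraMap R A r
        rw [← Algebra.commutes, mul_assoc, hVU, mul_one] }
  have h := Polynomial.aeval_algHom_apply e x p
  simp only [e, AlgHom.coe_mk, RingHom.coe_mk, MonoidHom.coe_mk, OneHom.coe_mk] at h
  exact h

lemma conj_sq_zero_helper {A : Type*} [Ring A]
    (U V x : A) (hUV : U * V = 1) (hVU : V * U = 1) (h : (V * x * U) ^ 2 = 0) :
    x ^ 2 = 0 := by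
  have e : U * ((V * x * U) * (V * x * U)) * V = x * x := by
    simp only [mul_assoc]
    rw [hUV, mul_one, ← mul_assoc U V x, hUV, one_mul, ← mul_assoc U V, hUV, one_mul]
  rw [pow_two] at h ⊢
  rw [← e, h, mul_zero, zero_mul]

end helpers

/-- Every semisimple matrix over a finite field of characteristic 2 (i.e. `GF(2^n)`) is a
square: if `A ∈ Mat_m(GF(2^n))` is diagonalizable over the algebraic closure, then there
is `B ∈ Mat_m(GF(2^n))` with `B^2 = A`. -/
theorem semisimple_is_square {F : Type*} [Field F] [Fintype F] [CharP F 2]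
    {m : ℕ} (A : Matrix (Fin m) (Fin m) F)
    (hss : ∃ d : Fin m → AlgebraicClosure F, ∃ U : Matrix (Fin m) (Fin m) (AlgebraicClosure F),
      IsUnit U.det ∧
      A.map (algebraMap F (AlgebraicClosure F)) = U⁻¹ * Matrix.diagonal d * U) :
    ∃ B : Matrix (Fin m) (Fin m) F, B ^ 2 = A := by
  classical
  obtain ⟨d, U, hU, hA⟩ := hss
  have hUV : U * U⁻¹ = 1 := Matrix.mul_nonsing_inv U hU
  have hVU : U⁻¹ * U = 1 := Matrix.nonsing_inv_mul U hU
  let f : F →ₐ[F] AlgebraicClosure F := Algebra.ofId F (AlgebraicClosure F)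
  let Φ : Matrix (Fin m) (Fin m) F →ₐ[F] Matrix (Fin m) (Fin m) (AlgebraicClosure F) :=
    AlgHom.mapMatrix f
  have hΦA : Φ A = U⁻¹ * Matrix.diagonal d * U := hA
  -- key reducedness fact: F[A] has no nonzero square-zero elements
  have key : ∀ p : F[X], (aeval A p) ^ 2 = 0 → aeval A p = 0 := by
    intro p hp
    have h1 : Φ (aeval A p) = aeval (Φ A) p := (Polynomial.aeval_algHom_apply Φ A p).symm
    have h2 : aeval (Φ A) p = U⁻¹ * Matrix.diagonal (fun i => aeval (d i) p) * U := by
      rw [hΦA, aeval_conj_helper U U⁻¹ _ hUV hVU p, aeval_diagonal_helper]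
    have hΦp : (U⁻¹ * Matrix.diagonal (fun i => aeval (d i) p) * U) ^ 2 = 0 := by
      rw [← h2, ← h1, ← map_pow, hp, map_zero]
    have hsq : (Matrix.diagonal (fun i => aeval (d i) p)) ^ 2 = 0 :=
      conj_sq_zero_helper U U⁻¹ _ hUV hVU hΦp
    have hd0 : ∀ i, aeval (d i) p = 0 := by
      intro i
      have h3 : (aeval (d i) p) ^ 2 = 0 := by
        have := congrFun (congrFun hsq i) i
        simpa [pow_two, Matrix.diagonal_mul_diagonal, Matrix.diagonal_apply] using this
      exact pow_eq_zero_iff (by norm_num) |>.mp h3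
    have hdg : Matrix.diagonal (fun i => aeval (d i) p) = 0 := by
      ext i j; by_cases h : i = j <;> simp [Matrix.diagonal_apply, h, hd0]
    have hΦ0 : Φ (aeval A p) = 0 := by
      rw [h1, h2, hdg, mul_zero, zero_mul]
    ext i j
    have hfinj : Function.Injective f := f.toRingHom.injective
    have := congrFun (congrFun hΦ0 i) j
    simp only [Φ, AlgHom.mapMatrix_apply, Matrix.map_apply, Matrix.zero_apply] at this
    simpa using hfinj (by simpa using this)
  -- the subalgebra F[A]
  set S : Subalgebra F (Matrix (Fin m) (Fin m) F) := (Polynomial.aeval A).range with hS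
  have hAS : A ∈ S := ⟨X, aeval_X A⟩
  -- squaring as a self-map of S
  let sq : S → S := fun x => ⟨(x : Matrix (Fin m) (Fin m) F) ^ 2, S.pow_mem x.2 2⟩
  have hinj : Function.Injective sq := by
    rintro ⟨x, px, hx0⟩ ⟨y, py, hy0⟩ hxy
    have hx : aeval A px = x := hx0
    have hy : aeval A py = y := hy0
    have hxy' : x ^ 2 = y ^ 2 := congrArg Subtype.val hxy
    -- char 2 : z + z = 0 for matrices
    have hchar : ∀ z : Matrix (Fin m) (Fin m) F, z + z = 0 := by
      intro z
      have h2 : (2 : F) = 0 := by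
        have := CharP.cast_eq_zero F 2
        simpa using this
      calc z + z = (2 : F) • z := (two_smul F z).symm
        _ = 0 := by rw [h2, zero_smul]
    have hsum : x + y = aeval A (px + py) := by rw [map_add, hx, hy]
    have hsumsq : (x + y) ^ 2 = 0 := by
      have hcomm : x * y = y * x := by
        rw [← hx, ← hy, ← _root_.map_mul, ← _root_.map_mul, mul_comm px py]
      have expand : (x + y) ^ 2 = x ^ 2 + (x * y + y * x) + y ^ 2 := by
        rw [pow_two, pow_two, pow_two, add_mul, mul_add, mul_add]
        abel
      rw [expand, hcomm, hxy', hchar (y * x), add_zero, hchar (y ^ 2)]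
    have h0 : x + y = 0 := by
      rw [hsum] at hsumsq ⊢
      exact key _ hsumsq
    have hxeqy : x = y := by
      have := congrArg (· + y) h0
      simpa [add_assoc, hchar y] using this
    exact Subtype.ext hxeqy
  have hsurj : Function.Surjective sq := Finite.surjective_of_injective hinj
  obtain ⟨⟨B, hB⟩, hB2⟩ := hsurj ⟨A, hAS⟩
  exact ⟨B, congrArg Subtype.val hB2⟩
end

section
/- Define Δ : Partitions → Partitions by requiring the multiplicity of i in Δ(λ) to equal 2·m_{2i}(λ) + m_{2i-1}(λ) + m_{2i+1}(λ) for all i ≥ 1 (where m_j(λ) is the multiplicity of the part j in λ). Then a partition μ lies in the image of Δ if and only if every odd part of the conjugate partition μ' has multiplicity at most 1. -/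
/- We represent a partition by its multiplicity function: a finitely supported
`m : ℕ →₀ ℕ` with `m 0 = 0`, where `m i` is the multiplicity of the part `i`. -/

/-- The `i`-th part (for `i ≥ 1`) of the conjugate partition: `λ'_i = Σ_{j ≥ i} m_j`. -/
def conjPart (m : ℕ →₀ ℕ) (i : ℕ) : ℕ :=
  ∑ j ∈ m.support, if i ≤ j then m j else 0

/-- The multiplicity of the part `k` in the conjugate partition. -/
noncomputable def conjMult (m : ℕ →₀ ℕ) (k : ℕ) : ℕ :=
  Set.ncard {i : ℕ | 1 ≤ i ∧ conjPart m i = k}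

lemma conjPart_succ (m : ℕ →₀ ℕ) (i : ℕ) : conjPart m i = m i + conjPart m (i + 1) := by
  unfold conjPart
  have h : ∀ j ∈ m.support,
      (if i ≤ j then m j else 0) = (if j = i then m j else 0) + (if i + 1 ≤ j then m j else 0) := by
    intro j _
    split_ifs <;> omega
  rw [Finset.sum_congr rfl h, Finset.sum_add_distrib, Finset.sum_ite_eq' m.support i m]
  by_cases hi : i ∈ m.support
  · rw [if_pos hi]
  · rw [if_neg hi, Finsupp.notMem_support_iff.mp hi]

lemma conjPart_zero_of_lt (m : ℕ →₀ ℕ) (i : ℕ) (h : ∀ j ∈ m.support, j < i) :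
    conjPart m i = 0 :=
  Finset.sum_eq_zero fun j hj => by rw [if_neg (by exact not_le.2 (h j hj))]

lemma conjPart_anti (m : ℕ →₀ ℕ) {i j : ℕ} (h : i ≤ j) : conjPart m j ≤ conjPart m i := by
  induction j with
  | zero =>
    have : i = 0 := Nat.le_zero.mp h
    simp [this]
  | succ k ih =>
    rcases Nat.lt_or_ge i (k+1) with h' | h'
    · have := ih (by omega)
      have := conjPart_succ m k
      omega
    · have : i = k + 1 := by omega
      rw [this]

lemma tele (f g : ℕ → ℕ) (N : ℕ)
    (hf : ∀ n, N ≤ n → f n = 0) (hg : ∀ n, N ≤ n → g n = 0)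
    (hrec : ∀ n, 1 ≤ n → ∃ c, f n = c + f (n + 1) ∧ g n = c + g (n + 1)) :
    ∀ n, 1 ≤ n → f n = g n := by
  have key : ∀ k n, N ≤ n + k → 1 ≤ n → f n = g n := by
    intro k
    induction k with
    | zero => intro n h h1; rw [hf n (by omega), hg n (by omega)]
    | succ k ih =>
      intro n h h1
      by_cases hN : N ≤ n
      · rw [hf n hN, hg n hN]
      · obtain ⟨c, h1', h2'⟩ := hrec n h1
        have := ih (n + 1) (by omega) (by omega)
        omega
  intro n h1; exact key N n (by omega) h1

/-- A partition `μ` is of the form `Δ(λ)` (where `m_i(Δ(λ)) = 2 m_{2i}(λ) + m_{2i-1}(λ)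
+ m_{2i+1}(λ)` for all `i ≥ 1`) if and only if every odd part of the conjugate of `μ` has
multiplicity at most 1. -/
theorem mem_image_delta_iff (mu : ℕ →₀ ℕ) (hmu : mu 0 = 0) :
    (∃ lam : ℕ →₀ ℕ, lam 0 = 0 ∧
        ∀ i : ℕ, 1 ≤ i → mu i = 2 * lam (2 * i) + lam (2 * i - 1) + lam (2 * i + 1))
      ↔ ∀ i : ℕ, 1 ≤ i → conjMult mu (2 * i - 1) ≤ 1 := by
  -- bound for mu
  set B : ℕ := mu.support.sup id + 1 with hB
  have hBmu : ∀ j ∈ mu.support, j < B := fun j hj => by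
    have := Finset.le_sup (f := id) hj; simpa [hB] using Nat.lt_succ_of_le this
  have hmuzero : ∀ n, B ≤ n → conjPart mu n = 0 := fun n hn =>
    conjPart_zero_of_lt mu n (fun j hj => lt_of_lt_of_le (hBmu j hj) hn)
  -- finiteness of the level sets (for k ≥ 1)
  have hfin : ∀ k : ℕ, 1 ≤ k → {i : ℕ | 1 ≤ i ∧ conjPart mu i = k}.Finite := by
    intro k hk
    apply Set.Finite.subset (Set.finite_Iio B)
    intro i hi
    simp only [Set.mem_setOf_eq] at hi
    by_contra hc
    have : conjPart mu i = 0 := hmuzero i (by simpa [Set.mem_Iio] using hc)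
    omega
  constructor
  · rintro ⟨lam, hlam0, hrel⟩ t ht
    -- conjugate of lam
    set A : ℕ → ℕ := conjPart lam with hA
    set C : ℕ := lam.support.sup id + 1 with hC
    have hClam : ∀ j ∈ lam.support, j < C := fun j hj => by
      have := Finset.le_sup (f := id) hj; simpa [hC] using Nat.lt_succ_of_le this
    have hlamzero : ∀ n, C ≤ n → A n = 0 := fun n hn =>
      conjPart_zero_of_lt lam n (fun j hj => lt_of_lt_of_le (hClam j hj) hn)
    have key : ∀ n, 1 ≤ n → conjPart mu n = A (2 * n - 1) + A (2 * n) := by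
      apply tele _ _ (max B C)
      · intro n hn; exact hmuzero n (le_trans (le_max_left _ _) hn)
      · intro n hn
        have h1 : C ≤ 2 * n - 1 := by
          have := le_trans (le_max_right B C) hn; omega
        rw [hlamzero _ h1, hlamzero _ (by omega)]
      · intro n hn
        refine ⟨mu n, by have := conjPart_succ mu n; omega, ?_⟩
        have e1 : A (2 * n - 1) = lam (2 * n - 1) + A (2 * n) := by
          have := conjPart_succ lam (2 * n - 1)
          have e : 2 * n - 1 + 1 = 2 * n := by omega
          rw [e] at this; exact this
        have e2 : A (2 * n) = lam (2 * n) + A (2 * n + 1) := conjPart_succ lam (2 * n)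
        have e3 : A (2 * n + 1) = lam (2 * n + 1) + A (2 * n + 2) := conjPart_succ lam (2 * n + 1)
        have e4 : 2 * (n + 1) - 1 = 2 * n + 1 := by omega
        have e5 : 2 * (n + 1) = 2 * n + 2 := by omega
        rw [e4, e5]
        have := hrel n hn
        omega
    -- now show ncard ≤ 1
    unfold conjMult
    rw [Set.ncard_le_one_iff (hfin _ (by omega))]
    have main : ∀ a b : ℕ, 1 ≤ a → conjPart mu a = 2 * t - 1 →
        conjPart mu b = 2 * t - 1 → a < b → False := by
      intro a b ha1 ha2 hb2 hab
      have hmid : conjPart mu (a + 1) = 2 * t - 1 := by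
        have h1 := conjPart_anti mu (show a ≤ a + 1 by omega)
        have h2 := conjPart_anti mu (show a + 1 ≤ b by omega)
        omega
      have k1 := key a ha1
      have k2 := key (a + 1) (by omega)
      have e4 : 2 * (a + 1) - 1 = 2 * a + 1 := by omega
      have e5 : 2 * (a + 1) = 2 * a + 2 := by omega
      rw [e4, e5] at k2
      have m1 := conjPart_anti lam (show 2 * a - 1 ≤ 2 * a by omega)
      have m2 := conjPart_anti lam (show 2 * a ≤ 2 * a + 1 by omega)
      have m3 := conjPart_anti lam (show 2 * a + 1 ≤ 2 * a + 2 by omega)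
      simp only [← hA] at m1 m2 m3
      omega
    rintro a b ⟨ha1, ha2⟩ ⟨hb1, hb2⟩
    by_contra hne
    rcases Nat.lt_or_ge a b with h | h
    · exact main a b ha1 ha2 hb2 h
    · exact main b a hb1 hb2 ha2 (by omega)
  · intro hyp
    set c : ℕ → ℕ := conjPart mu with hc
    set g : ℕ → ℕ := fun k => (c ((k + 1) / 2) + if k % 2 = 1 then 1 else 0) / 2 with hg
    have g_odd : ∀ i : ℕ, 1 ≤ i → g (2 * i - 1) = (c i + 1) / 2 := by
      intro i hi
      have e1 : (2 * i - 1 + 1) / 2 = i := by omega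
      have e2 : (2 * i - 1) % 2 = 1 := by omega
      simp [hg, e1, e2]
    have g_even : ∀ i : ℕ, g (2 * i) = c i / 2 := by
      intro i
      have e1 : (2 * i + 1) / 2 = i := by omega
      have e2 : (2 * i) % 2 = 0 := by omega
      simp [hg, e1, e2]
    -- monotonicity of g on [1, ∞)
    have gmono : ∀ k : ℕ, 1 ≤ k → g (k + 1) ≤ g k := by
      intro k hk
      rcases Nat.even_or_odd k with ⟨i, hi⟩ | ⟨i, hi⟩
      · -- k = 2i, i ≥ 1; g(2i) = c i / 2 ≥ g(2i+1) = (c (i+1) + 1)/2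
        have hi1 : 1 ≤ i := by omega
        have ek : k = 2 * i := by omega
        have e1 : k + 1 = 2 * (i + 1) - 1 := by omega
        rw [e1, g_odd (i + 1) (by omega), ek, g_even i]
        have hanti : c (i + 1) ≤ c i := conjPart_anti mu (by omega)
        rcases Nat.lt_or_ge (c (i + 1)) (c i) with hlt | hge
        · omega
        · have heq : c i = c (i + 1) := by omega
          rcases Nat.even_or_odd (c i) with ⟨x, hx⟩ | ⟨x, hx⟩
          · omega
          · -- c i odd, repeated: contradiction with hyp
            exfalso
            have hx1 : 1 ≤ x + 1 := by omega
            have hcard := hyp (x + 1) hx1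
            have e2 : 2 * (x + 1) - 1 = c i := by omega
            rw [e2] at hcard
            unfold conjMult at hcard
            have hsub : ({i, i + 1} : Set ℕ) ⊆ {n : ℕ | 1 ≤ n ∧ conjPart mu n = c i} := by
              rintro n (rfl | rfl)
              · exact ⟨by omega, rfl⟩
              · exact ⟨by omega, heq.symm⟩
            have h2 : ({i, i + 1} : Set ℕ).ncard = 2 := Set.ncard_pair (by omega)
            have := Set.ncard_le_ncard hsub (hfin (c i) (by omega))
            omega
      · -- k = 2i+1 = 2(i+1)-1; g(k) = (c(i+1)+1)/2 ≥ g(k+1) = c(i+1)/2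
        have ek : k = 2 * (i + 1) - 1 := by omega
        have e1 : k + 1 = 2 * (i + 1) := by omega
        rw [e1, ek, g_odd (i + 1) (by omega), g_even (i + 1)]
        omega
    -- construct lam
    refine ⟨Finsupp.onFinset (Finset.range (2 * B))
      (fun j => if j = 0 then 0 else g j - g (j + 1)) ?_, ?_, ?_⟩
    · intro j hj
      simp only [Finset.mem_range]
      by_contra hc2
      push_neg at hc2
      have hj0 : j ≠ 0 := by intro h; subst h; simp at hj
      have hgj : g j = 0 := by
        have e1 : B ≤ (j + 1) / 2 := by omega
        have h0 : c ((j + 1) / 2) = 0 := hmuzero _ e1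
        simp only [hg, h0]
        split_ifs <;> norm_num
      simp [hj0, hgj] at hj
    · simp
    · intro i hi
      have h2i : (2 : ℕ) * i ≠ 0 := by omega
      have h2i1 : (2 : ℕ) * i - 1 ≠ 0 := by omega
      have h2i2 : (2 : ℕ) * i + 1 ≠ 0 := by omega
      simp only [Finsupp.onFinset_apply, if_neg h2i, if_neg h2i1, if_neg h2i2]
      have e0 : 2 * i - 1 + 1 = 2 * i := by omega
      have e0b : 2 * i + 1 + 1 = 2 * i + 2 := by omega
      rw [e0, e0b]
      -- key values
      have v1 : g (2 * i - 1) + g (2 * i) = c i := by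
        rw [g_odd i hi, g_even i]; omega
      have v2 : g (2 * i + 1) + g (2 * i + 2) = c (i + 1) := by
        have e1 : 2 * i + 1 = 2 * (i + 1) - 1 := by omega
        have e2 : 2 * i + 2 = 2 * (i + 1) := by omega
        rw [e1, e2, g_odd (i + 1) (by omega), g_even (i + 1)]; omega
      have rec1 : c i = mu i + c (i + 1) := conjPart_succ mu i
      have m1 : g (2 * i) ≤ g (2 * i - 1) := by
        have := gmono (2 * i - 1) (by omega)
        rwa [e0] at this
      have m2 : g (2 * i + 1) ≤ g (2 * i) := gmono (2 * i) (by omega)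
      have m3 : g (2 * i + 2) ≤ g (2 * i + 1) := gmono (2 * i + 1) (by omega)
      omega
end

section
/- If μ = Δ(λ), where Δ is defined by m_i(Δ(λ)) = 2·m_{2i}(λ) + m_{2i-1}(λ) + m_{2i+1}(λ), then for every i ≥ 1, the i-th part of the conjugate μ'_i is congruent to m_{2i-1}(λ) modulo 2. -/
/-- If `μ = Δ(λ)`, i.e. `m_i(μ) = 2 m_{2i}(λ) + m_{2i-1}(λ) + m_{2i+1}(λ)` for all `i ≥ 1`,
then for every `i ≥ 1` the `i`-th part of the conjugate of `μ` is congruent to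
`m_{2i-1}(λ)` modulo 2. -/
theorem conjPart_mod_two (lam mu : ℕ →₀ ℕ) (hlam : lam 0 = 0) (hmu : mu 0 = 0)
    (h : ∀ i : ℕ, 1 ≤ i → mu i = 2 * lam (2 * i) + lam (2 * i - 1) + lam (2 * i + 1)) :
    ∀ i : ℕ, 1 ≤ i → conjPart mu i ≡ lam (2 * i - 1) [MOD 2] := by
  intro i hi
  set N := mu.support.sup id + lam.support.sup id + i + 1 with hN
  have hiN : i ≤ N := by omega
  have hmuN : ∀ j, N < j → mu j = 0 := by
    intro j hj
    by_contra hne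
    have hmem : j ∈ mu.support := Finsupp.mem_support_iff.mpr hne
    have := Finset.le_sup (f := id) hmem
    simp only [id] at this
    omega
  have hlamN : lam (2 * N + 1) = 0 := by
    by_contra hne
    have hmem : 2 * N + 1 ∈ lam.support := Finsupp.mem_support_iff.mpr hne
    have := Finset.le_sup (f := id) hmem
    simp only [id] at this
    omega
  have key : ∀ M, i ≤ M →
      (∑ j ∈ Finset.Icc i M, mu j) % 2 = (lam (2 * i - 1) + lam (2 * M + 1)) % 2 := by
    intro M hM
    induction M, hM using Nat.le_induction with
    | base =>
      rw [Finset.Icc_self, Finset.sum_singleton, h i hi]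
      omega
    | succ M hM ih =>
      rw [Finset.sum_Icc_succ_top (by omega), h (M + 1) (by omega)]
      have e1 : 2 * (M + 1) - 1 = 2 * M + 1 := by omega
      have e2 : 2 * (M + 1) + 1 = 2 * M + 3 := by omega
      rw [e1, e2]
      omega
  have hsub : mu.support ⊆ Finset.range (N + 1) := by
    intro j hj
    have hne := Finsupp.mem_support_iff.mp hj
    have : ¬ N < j := fun hc => hne (hmuN j hc)
    exact Finset.mem_range.mpr (by omega)
  have e1 : conjPart mu i = ∑ j ∈ Finset.range (N + 1), if i ≤ j then mu j else 0 := by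
    rw [conjPart]
    refine Finset.sum_subset hsub ?_
    intro j _ hj
    simp [Finsupp.notMem_support_iff.mp hj]
  have e2 : (∑ j ∈ Finset.range (N + 1), if i ≤ j then mu j else 0)
      = ∑ j ∈ Finset.Icc i N, mu j := by
    rw [← Finset.sum_filter]
    congr 1
    ext j
    simp only [Finset.mem_filter, Finset.mem_range, Finset.mem_Icc]
    omega
  show conjPart mu i % 2 = lam (2 * i - 1) % 2
  rw [e1, e2, key N hiN, hlamN]
  omega
end

section
/- Let G(z) = ∏_{n≥1} (1 - 2z^{2n}) / ((1 - 2z^n)(1 - 2z^{4n})) as a formal power series with integer coefficients a'(n). Then, viewing G as a function holomorphic on |z| < 1/2 with a simple pole at z = 1/2 and no other singularities on |z| = 1/2, there exists a real constant α' > 0 such that a'(n) ~ α'·2^n as n → ∞. -/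
open PowerSeries Filter Finset

noncomputable def fS (m : ℕ) : PowerSeries ℚ := 1 - 2 • PowerSeries.X ^ m

noncomputable def gS (m : ℕ) : PowerSeries ℚ :=
  PowerSeries.mk fun j => if m ∣ j then (2:ℚ)^(j/m) else 0

lemma fS_eq (m : ℕ) : fS m = 1 - (PowerSeries.C (R := ℚ)) 2 * PowerSeries.X ^ m := by
  rw [fS, nsmul_eq_mul]
  simp [← map_ofNat ((PowerSeries.C (R := ℚ))) 2]

lemma coeff_fS (m j : ℕ) : coeff j (fS m) =
    (if j = 0 then 1 else 0) - (if j = m then 2 else 0) := by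
  rw [fS_eq, map_sub, coeff_one, coeff_C_mul, coeff_X_pow]
  split <;> norm_num

lemma coeff_gS (m j : ℕ) : coeff j (gS m) = if m ∣ j then (2:ℚ)^(j/m) else 0 := by
  simp [gS]

lemma gS_nonneg (m j : ℕ) : 0 ≤ coeff j (gS m) := by
  rw [coeff_gS]; split <;> positivity

lemma fS_mul_gS (m : ℕ) (hm : 0 < m) : fS m * gS m = 1 := by
  ext n
  rw [fS_eq, sub_mul, one_mul, mul_assoc, map_sub, coeff_C_mul]
  rcases lt_or_ge n m with h | h
  · rw [PowerSeries.coeff_X_pow_mul']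
    rcases Nat.eq_zero_or_pos n with rfl | hn
    · simp [coeff_gS, hm.ne', not_le.mpr h]
    · have : ¬ m ∣ n := fun hd => absurd (Nat.le_of_dvd hn hd) (not_le.mpr h)
      simp [coeff_gS, this, not_le.mpr h, hn.ne', coeff_one]
  · rw [PowerSeries.coeff_X_pow_mul']
    have hn : n ≠ 0 := by omega
    simp only [h, if_true, coeff_gS, coeff_one, hn, if_false]
    have hdvd : m ∣ n ↔ m ∣ (n - m) := by
      constructor
      · intro hd; exact (Nat.dvd_sub hd dvd_rfl)
      · intro hd; have := Nat.dvd_add hd (dvd_refl m); rwa [Nat.sub_add_cancel h] at this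
    by_cases hd : m ∣ n
    · rw [if_pos hd, if_pos (hdvd.mp hd)]
      rw [Nat.div_eq_sub_div hm h, pow_succ]
      ring
    · rw [if_neg hd, if_neg (fun h' => hd (hdvd.mpr h'))]; ring


/-- W ≡ 1 mod X^{n+1} -/
def OneUpTo (n : ℕ) (W : PowerSeries ℚ) : Prop :=
  ∀ j ≤ n, coeff j W = if j = 0 then 1 else 0

lemma oneUpTo_one (n : ℕ) : OneUpTo n 1 := fun j _ => coeff_one j

lemma OneUpTo.mul {n : ℕ} {A B : PowerSeries ℚ} (hA : OneUpTo n A) (hB : OneUpTo n B) :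
    OneUpTo n (A * B) := by
  intro j hj
  rw [coeff_mul]
  rw [Finset.sum_eq_single (0, j)]
  · rw [hA 0 (by omega), hB j hj]; simp
  · rintro ⟨a, b⟩ hab hne
    simp only [Finset.HasAntidiagonal.mem_antidiagonal] at hab
    by_cases ha : a = 0
    · exact absurd (by simp [ha, hab.symm, ← hab, ha]) hne
      -- (0,b) with a=0 means b=j so pair = (0,j), contradiction
    · rw [hA a (by omega), if_neg ha, zero_mul]
  · intro h; exact absurd (by simp) h

lemma coeff_mul_oneUpTo {n j : ℕ} (hj : j ≤ n) {A W : PowerSeries ℚ} (hW : OneUpTo n W) :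
    coeff j (A * W) = coeff j A := by
  rw [coeff_mul, Finset.sum_eq_single (j, 0)]
  · rw [hW 0 (by omega)]; simp
  · rintro ⟨a, b⟩ hab hne
    simp only [Finset.HasAntidiagonal.mem_antidiagonal] at hab
    by_cases hb : b = 0
    · exact absurd (by simp [hb, ← hab]) hne
    · rw [hW b (by omega), if_neg hb, mul_zero]
  · intro h; exact absurd (by simp) h

lemma oneUpTo_prod {n : ℕ} {T : Finset ℕ} {F : ℕ → PowerSeries ℚ}
    (h : ∀ m ∈ T, OneUpTo n (F m)) : OneUpTo n (∏ m ∈ T, F m) := by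
  classical
  induction T using Finset.induction with
  | empty => simpa using oneUpTo_one n
  | insert _ _ hx ih =>
      rw [Finset.prod_insert hx]
      exact (h _ (Finset.mem_insert_self _ _)).mul
        (ih fun m hm => h m (Finset.mem_insert_of_mem hm))


lemma constantCoeff_fS (m : ℕ) (hm : 0 < m) : constantCoeff (fS m) = 1 := by
  rw [← coeff_zero_eq_constantCoeff, coeff_fS]
  have : ¬ (0 = m) := by omega
  simp [this]

lemma inv_pair (k : ℕ) (hk : 0 < k) :
    ((fS k) * (fS (4 * k)))⁻¹ = gS k * gS (4 * k) := by
  have h4 : 0 < 4 * k := by omega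
  have hc : constantCoeff (fS k * fS (4 * k)) ≠ 0 := by
    rw [map_mul, constantCoeff_fS _ hk, constantCoeff_fS _ h4]; norm_num
  rw [eq_comm, PowerSeries.eq_inv_iff_mul_eq_one hc]
  calc gS k * gS (4*k) * (fS k * fS (4*k))
      = (fS k * gS k) * (fS (4*k) * gS (4*k)) := by ring
    _ = 1 := by rw [fS_mul_gS _ hk, fS_mul_gS _ h4, one_mul]

lemma filter_dvd_eq_image (d n : ℕ) (hd : 0 < d) :
    (Finset.Ioc 0 n).filter (d ∣ ·) = (Finset.Ioc 0 (n/d)).image (d * ·) := by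
  ext m
  simp only [Finset.mem_filter, Finset.mem_Ioc, Finset.mem_image]
  constructor
  · rintro ⟨⟨hm0, hmn⟩, c, rfl⟩
    have hc0 : 0 < c := by
      rcases Nat.eq_zero_or_pos c with rfl | h
      · simp at hm0
      · exact h
    refine ⟨c, ⟨hc0, (Nat.le_div_iff_mul_le hd).mpr (by rwa [mul_comm])⟩, rfl⟩
  · rintro ⟨k, ⟨hk0, hk⟩, rfl⟩
    have hkd : k * d ≤ n := (Nat.le_div_iff_mul_le hd).mp hk
    exact ⟨⟨Nat.mul_pos hd hk0, by rwa [mul_comm]⟩, ⟨k, rfl⟩⟩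

lemma prod_gS_dvd (d n : ℕ) (hd : 0 < d) :
    ∏ k ∈ Finset.Ioc 0 (n/d), gS (d * k) = ∏ m ∈ (Finset.Ioc 0 n).filter (d ∣ ·), gS m := by
  rw [filter_dvd_eq_image d n hd, Finset.prod_image]
  intro a _ b _ h
  exact Nat.eq_of_mul_eq_mul_left hd h

def PP (m : ℕ) : Prop := ¬ 2 ∣ m ∨ 4 ∣ m

instance : DecidablePred PP := fun m => by unfold PP; infer_instance

lemma main_split (n : ℕ) :
    (∏ k ∈ Finset.Ioc 0 n, fS (2 * k) * (gS k * gS (4 * k))) =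
      (∏ m ∈ (Finset.Ioc 0 n).filter PP, gS m) *
        ((∏ k ∈ Finset.Ioc (n/2) n, fS (2 * k)) * ∏ k ∈ Finset.Ioc (n/4) n, gS (4 * k)) := by
  have h2 : n / 2 ≤ n := Nat.div_le_self n 2
  have h4 : n / 4 ≤ n := Nat.div_le_self n 4
  rw [Finset.prod_mul_distrib, Finset.prod_mul_distrib]
  rw [← Finset.prod_Ioc_consecutive (fun k => fS (2*k)) (Nat.zero_le _) h2]
  rw [← Finset.prod_Ioc_consecutive (fun k => gS (4*k)) (Nat.zero_le _) h4]
  have hsplit : (∏ k ∈ Finset.Ioc 0 n, gS k) =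
      (∏ k ∈ Finset.Ioc 0 (n/2), gS (2*k)) *
        ∏ m ∈ (Finset.Ioc 0 n).filter (fun m => ¬ 2 ∣ m), gS m := by
    rw [prod_gS_dvd 2 n (by norm_num), Finset.prod_filter_mul_prod_filter_not]
  rw [hsplit, prod_gS_dvd 4 n (by norm_num)]
  have hcancel : (∏ k ∈ Finset.Ioc 0 (n/2), fS (2*k)) * ∏ k ∈ Finset.Ioc 0 (n/2), gS (2*k)
      = 1 := by
    rw [← Finset.prod_mul_distrib]
    rw [Finset.prod_congr rfl (fun k hk => fS_mul_gS (2*k) (by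
      simp only [Finset.mem_Ioc] at hk; omega))]
    exact Finset.prod_const_one
  have hmerge : (∏ m ∈ (Finset.Ioc 0 n).filter (fun m => ¬ 2 ∣ m), gS m) *
      (∏ m ∈ (Finset.Ioc 0 n).filter (4 ∣ ·), gS m)
      = ∏ m ∈ (Finset.Ioc 0 n).filter PP, gS m := by
    rw [← Finset.prod_union (by
      rw [Finset.disjoint_filter]
      intro m _ hm h4m
      exact hm (dvd_trans ⟨2, rfl⟩ h4m))]
    congr 1
    ext m
    simp only [Finset.mem_union, Finset.mem_filter, PP]
    tauto
  rw [← hmerge]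
  linear_combination ((∏ k ∈ Finset.Ioc (n/2) n, fS (2*k)) *
    (∏ m ∈ (Finset.Ioc 0 n).filter (fun m => ¬ 2 ∣ m), gS m) *
    (∏ m ∈ (Finset.Ioc 0 n).filter (4 ∣ ·), gS m) *
    (∏ k ∈ Finset.Ioc (n/4) n, gS (4*k))) * hcancel


lemma oneUpTo_fS {n m : ℕ} (h : n < m) : OneUpTo n (fS m) := by
  intro j hj
  rw [coeff_fS]
  have : j ≠ m := by omega
  simp [this]

lemma oneUpTo_gS {n m : ℕ} (h : n < m) : OneUpTo n (gS m) := by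
  intro j hj
  rw [coeff_gS]
  rcases Nat.eq_zero_or_pos j with rfl | hp
  · simp
  · have : ¬ m ∣ j := fun hd => absurd (Nat.le_of_dvd hp hd) (by omega)
    simp [this, hp.ne']

/-- The coefficient `a'(n)` of the formal power series
`G(z) = ∏_{k≥1} (1 - 2z^{2k}) / ((1 - 2z^k)(1 - 2z^{4k}))`; since the factor of index `k`
is `1 + O(z^k)`, the `n`-th coefficient only depends on the factors with `k ≤ n`. -/
noncomputable def aCoeff (n : ℕ) : ℚ :=
  PowerSeries.coeff n
    (∏ k ∈ Finset.Icc 1 n,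
      ((1 : PowerSeries ℚ) - 2 • PowerSeries.X ^ (2 * k)) *
        (((1 : PowerSeries ℚ) - 2 • PowerSeries.X ^ k) *
          ((1 : PowerSeries ℚ) - 2 • PowerSeries.X ^ (4 * k)))⁻¹)

/-- main coefficient identity -/
lemma aCoeff_eq_filter (n : ℕ) :
    aCoeff n = coeff n (∏ m ∈ (Finset.Ioc 0 n).filter PP, gS m) := by
  have hIcc : Finset.Icc 1 n = Finset.Ioc 0 n := rfl
  rw [aCoeff, hIcc]
  have hcong : (∏ k ∈ Finset.Ioc 0 n,
      ((1 : PowerSeries ℚ) - 2 • PowerSeries.X ^ (2 * k)) *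
        (((1 : PowerSeries ℚ) - 2 • PowerSeries.X ^ k) *
          ((1 : PowerSeries ℚ) - 2 • PowerSeries.X ^ (4 * k)))⁻¹)
      = ∏ k ∈ Finset.Ioc 0 n, fS (2 * k) * (gS k * gS (4 * k)) :=
    Finset.prod_congr rfl (fun k hk => by
      rw [Finset.mem_Ioc] at hk
      show fS (2*k) * ((fS k * fS (4*k)))⁻¹ = _
      rw [inv_pair k hk.1])
  rw [hcong, main_split]
  refine coeff_mul_oneUpTo le_rfl ?_
  refine (oneUpTo_prod fun k hk => ?_).mul (oneUpTo_prod fun k hk => ?_)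
  · rw [Finset.mem_Ioc] at hk
    exact oneUpTo_fS (by omega)
  · rw [Finset.mem_Ioc] at hk
    exact oneUpTo_gS (by omega)

noncomputable def bC (m : ℕ) : ℚ := coeff m (∏ k ∈ (Finset.Ioc 1 m).filter PP, gS k)

lemma coeff_zero_prod_gS (T : Finset ℕ) : coeff 0 (∏ m ∈ T, gS m) = 1 := by
  have := oneUpTo_prod (n := 0) (T := T) (F := gS) (fun m _ => by
    intro j hj
    interval_cases j
    rw [coeff_gS]
    simp)
  simpa using this 0 le_rfl

lemma coeff_prod_gS_nonneg (T : Finset ℕ) (j : ℕ) : 0 ≤ coeff j (∏ m ∈ T, gS m) := by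
  classical
  induction T using Finset.induction generalizing j with
  | empty => simp [coeff_one]; split <;> norm_num
  | insert _ _ hx ih =>
      rw [Finset.prod_insert hx, coeff_mul]
      exact Finset.sum_nonneg fun p _ => mul_nonneg (gS_nonneg _ _) (ih _)

lemma bC_nonneg (m : ℕ) : 0 ≤ bC m := coeff_prod_gS_nonneg _ _

lemma bC_stable {j n : ℕ} (hj : j ≤ n) :
    coeff j (∏ k ∈ (Finset.Ioc 1 n).filter PP, gS k) = bC j := by
  rcases Nat.eq_zero_or_pos j with rfl | hp
  · rw [coeff_zero_prod_gS, bC]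
    simp [coeff_zero_prod_gS]
  · rw [← Finset.Ioc_union_Ioc_eq_Ioc hp hj, Finset.filter_union,
      Finset.prod_union (Finset.disjoint_filter_filter (by
        rw [Finset.disjoint_left]
        intro m hm hm'
        simp only [Finset.mem_Ioc] at hm hm'
        omega))]
    exact coeff_mul_oneUpTo le_rfl (oneUpTo_prod fun m hm => by
      simp only [Finset.mem_filter, Finset.mem_Ioc] at hm
      exact oneUpTo_gS (by omega))

lemma aCoeff_sum (n : ℕ) : aCoeff n = ∑ j ∈ Finset.range (n+1), 2^(n-j) * bC j := by
  rcases Nat.eq_zero_or_pos n with rfl | hn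
  · simp [aCoeff_eq_filter, bC, coeff_zero_prod_gS]
  · rw [aCoeff_eq_filter]
    have h1 : (Finset.Ioc 0 n).filter PP = insert 1 ((Finset.Ioc 1 n).filter PP) := by
      ext m
      simp only [Finset.mem_filter, Finset.mem_Ioc, Finset.mem_insert, PP]
      constructor
      · rintro ⟨⟨h0, hnle⟩, hP⟩
        rcases Nat.eq_or_lt_of_le h0 with h | h
        · left; omega
        · right; exact ⟨⟨h, hnle⟩, hP⟩
      · rintro (rfl | ⟨⟨h0, hnle⟩, hP⟩)
        · exact ⟨⟨one_pos, hn⟩, Or.inl (by decide)⟩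
        · exact ⟨⟨by omega, hnle⟩, hP⟩
    rw [h1, Finset.prod_insert (by simp [Finset.mem_filter])]
    rw [coeff_mul, Finset.Nat.sum_antidiagonal_eq_sum_range_succ_mk]
    rw [← Finset.sum_range_reflect]
    refine Finset.sum_congr rfl fun k hk => ?_
    rw [Finset.mem_range] at hk
    have hk' : k ≤ n := by omega
    rw [coeff_gS]
    rw [bC_stable (Nat.sub_le n _)]
    simp [Nat.div_one, Nat.sub_sub_self hk']


/-- geometric partial sum bound -/
lemma geom_partial_le {r : ℚ} (h0 : 0 ≤ r) (h1 : r < 1) (N : ℕ) :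
    ∑ i ∈ Finset.range N, r ^ i ≤ 1 / (1 - r) := by
  have hpos : 0 < 1 - r := by linarith
  rw [le_div_iff₀ hpos]
  have := geom_sum_mul r N
  have h2 : (∑ i ∈ Finset.range N, r ^ i) * (1 - r) = 1 - r ^ N := by
    have : (∑ i ∈ Finset.range N, r ^ i) * (r - 1) = r ^ N - 1 := geom_sum_mul r N
    linarith [this]
  rw [h2]
  have : (0:ℚ) ≤ r ^ N := pow_nonneg h0 N
  linarith

/-- product over finset of (1 + a m) is at most 1/(1 - sum) -/
lemma prod_one_add_le {T : Finset ℕ} {a : ℕ → ℚ} (h0 : ∀ m ∈ T, 0 ≤ a m)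
    (hs : ∑ m ∈ T, a m < 1) : ∏ m ∈ T, (1 + a m) ≤ 1 / (1 - ∑ m ∈ T, a m) := by
  classical
  induction T using Finset.induction with
  | empty => simp
  | @insert x T hx ih =>
      rw [Finset.prod_insert hx, Finset.sum_insert hx]
      rw [Finset.sum_insert hx] at hs
      have hax : 0 ≤ a x := h0 x (Finset.mem_insert_self _ _)
      have hT0 : ∀ m ∈ T, 0 ≤ a m := fun m hm => h0 m (Finset.mem_insert_of_mem hm)
      have hsT : (0:ℚ) ≤ ∑ m ∈ T, a m := Finset.sum_nonneg hT0
      have hs' : ∑ m ∈ T, a m < 1 := by linarith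
      have hih := ih hT0 hs'
      have hp1 : (0:ℚ) < 1 - ∑ m ∈ T, a m := by linarith
      have hp2 : (0:ℚ) < 1 - (a x + ∑ m ∈ T, a m) := by linarith
      calc (1 + a x) * ∏ m ∈ T, (1 + a m)
          ≤ (1 + a x) * (1 / (1 - ∑ m ∈ T, a m)) := by
            refine mul_le_mul_of_nonneg_left hih (by linarith)
        _ ≤ 1 / (1 - (a x + ∑ m ∈ T, a m)) := by
            rw [mul_one_div, div_le_div_iff₀ hp1 hp2, one_mul]
            nlinarith [sq_nonneg (a x)]
      done


noncomputable def SS (n : ℕ) (F : PowerSeries ℚ) (t : ℚ) : ℚ :=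
  ∑ j ∈ Finset.range (n+1), coeff j F * t ^ j

lemma SS_mul_le {n : ℕ} {F G : PowerSeries ℚ} {t : ℚ}
    (hF : ∀ j, 0 ≤ coeff j F) (hG : ∀ j, 0 ≤ coeff j G) (ht : 0 ≤ t) :
    SS n (F * G) t ≤ SS n F t * SS n G t := by
  classical
  have hbi : (Finset.range (n+1)).biUnion (fun j => Finset.HasAntidiagonal.antidiagonal j)
      = (Finset.range (n+1) ×ˢ Finset.range (n+1)).filter (fun p => p.1 + p.2 ≤ n) := by
    ext p
    simp only [Finset.mem_biUnion, Finset.mem_range, Finset.HasAntidiagonal.mem_antidiagonal,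
      Finset.mem_filter, Finset.mem_product]
    constructor
    · rintro ⟨j, hj, rfl⟩
      exact ⟨⟨by omega, by omega⟩, by omega⟩
    · rintro ⟨⟨h1, h2⟩, h3⟩
      exact ⟨p.1 + p.2, by omega, rfl⟩
  have hLHS : SS n (F * G) t
      = ∑ p ∈ (Finset.range (n+1) ×ˢ Finset.range (n+1)).filter (fun p => p.1 + p.2 ≤ n),
          (coeff p.1 F * t ^ p.1) * (coeff p.2 G * t ^ p.2) := by
    rw [SS, ← hbi, Finset.sum_biUnion]
    · refine Finset.sum_congr rfl fun j hj => ?_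
      rw [coeff_mul, Finset.sum_mul]
      refine Finset.sum_congr rfl fun p hp => ?_
      rw [Finset.HasAntidiagonal.mem_antidiagonal] at hp
      rw [← hp, pow_add]
      ring
    · intro a ha b hb hab
      simp only [Function.onFun]
      rw [Finset.disjoint_left]
      intro p hpa hpb
      rw [Finset.HasAntidiagonal.mem_antidiagonal] at hpa hpb
      exact hab (by rw [← hpa, ← hpb])
  rw [hLHS, SS, SS, Finset.sum_mul_sum, ← Finset.sum_product']
  refine Finset.sum_le_sum_of_subset_of_nonneg (Finset.filter_subset _ _) ?_
  intro p _ _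
  exact mul_nonneg (mul_nonneg (hF _) (pow_nonneg ht _))
    (mul_nonneg (hG _) (pow_nonneg ht _))

lemma SS_nonneg {n : ℕ} {F : PowerSeries ℚ} {t : ℚ}
    (hF : ∀ j, 0 ≤ coeff j F) (ht : 0 ≤ t) : 0 ≤ SS n F t :=
  Finset.sum_nonneg fun j _ => mul_nonneg (hF j) (pow_nonneg ht j)

lemma SS_prod_le {n : ℕ} {t : ℚ} (ht : 0 ≤ t) (T : Finset ℕ) :
    SS n (∏ m ∈ T, gS m) t ≤ ∏ m ∈ T, SS n (gS m) t := by
  classical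
  induction T using Finset.induction with
  | empty =>
      rw [Finset.prod_empty, Finset.prod_empty, SS]
      calc ∑ j ∈ Finset.range (n+1), coeff j 1 * t ^ j
          = ∑ j ∈ Finset.range (n+1), (if j = 0 then 1 else 0) * t ^ j := by
            refine Finset.sum_congr rfl fun j _ => by rw [coeff_one]
        _ = 1 := by simp
        _ ≤ 1 := le_refl 1
  | @insert x T hx ih =>
      rw [Finset.prod_insert hx, Finset.prod_insert hx]
      calc SS n (gS x * ∏ m ∈ T, gS m) t
          ≤ SS n (gS x) t * SS n (∏ m ∈ T, gS m) t :=
            SS_mul_le (gS_nonneg x) (coeff_prod_gS_nonneg T) ht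
        _ ≤ SS n (gS x) t * ∏ m ∈ T, SS n (gS m) t :=
            mul_le_mul_of_nonneg_left ih (SS_nonneg (gS_nonneg x) ht)

lemma SS_gS_le {n m : ℕ} {t : ℚ} (hm : 0 < m) (ht : 0 ≤ t) (h2 : 2 * t ^ m < 1) :
    SS n (gS m) t ≤ 1 / (1 - 2 * t ^ m) := by
  have himg : (Finset.range (n+1)).filter (m ∣ ·)
      = (Finset.range (n/m + 1)).image (m * ·) := by
    ext j
    simp only [Finset.mem_filter, Finset.mem_range, Finset.mem_image]
    constructor
    · rintro ⟨hj, c, rfl⟩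
      refine ⟨c, ?_, rfl⟩
      have hcm : m * c = c * m := mul_comm m c
      have : c * m ≤ n := by omega
      have := (Nat.le_div_iff_mul_le hm).mpr this
      omega
    · rintro ⟨i, hi, rfl⟩
      have : i * m ≤ n := (Nat.le_div_iff_mul_le hm).mp (by omega)
      have hcm : m * i = i * m := mul_comm m i
      exact ⟨by omega, ⟨i, rfl⟩⟩
  have hsum : SS n (gS m) t = ∑ i ∈ Finset.range (n/m + 1), (2 * t ^ m) ^ i := by
    rw [SS]
    calc ∑ j ∈ Finset.range (n+1), coeff j (gS m) * t ^ j
        = ∑ j ∈ Finset.range (n+1), (if m ∣ j then (2:ℚ)^(j/m) * t ^ j else 0) := by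
          refine Finset.sum_congr rfl fun j _ => by rw [coeff_gS]; split <;> simp
      _ = ∑ j ∈ (Finset.range (n+1)).filter (m ∣ ·), (2:ℚ)^(j/m) * t ^ j :=
          (Finset.sum_filter _ _).symm
      _ = ∑ i ∈ Finset.range (n/m + 1), (2:ℚ)^((m*i)/m) * t ^ (m*i) := by
          rw [himg, Finset.sum_image (fun a _ b _ h => Nat.eq_of_mul_eq_mul_left hm h)]
      _ = ∑ i ∈ Finset.range (n/m + 1), (2 * t ^ m) ^ i := by
          refine Finset.sum_congr rfl fun i _ => ?_
          rw [Nat.mul_div_cancel_left i hm, mul_pow, pow_mul]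
  rw [hsum]
  exact geom_partial_le (by positivity) (by linarith [pow_nonneg ht m]) _


lemma one_div_le_one_add {u : ℚ} (h0 : 0 ≤ u) (h6 : u ≤ 1/6) :
    1 / (1 - 2*u) ≤ 1 + 3*u := by
  have h : 0 < 1 - 2*u := by linarith
  rw [div_le_iff₀ h]
  nlinarith

lemma bC_partial_bound (n : ℕ) :
    ∑ j ∈ Finset.range (n+1), bC j * (1/2:ℚ) ^ j ≤ 2500 / 303 := by
  set t : ℚ := 13/25 with ht_def
  have ht0 : (0:ℚ) ≤ t := by norm_num
  have ht1 : t < 1 := by norm_num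
  set T := (Finset.Ioc 1 n).filter PP with hT
  have hmem : ∀ m ∈ T, 3 ≤ m ∧ m ≤ n := by
    intro m hm
    simp only [hT, Finset.mem_filter, Finset.mem_Ioc, PP] at hm
    obtain ⟨⟨h1, h2⟩, hP⟩ := hm
    refine ⟨?_, h2⟩
    by_contra h
    interval_cases m
    · rcases hP with h' | h' <;> revert h' <;> decide
  -- step 1: replace 1/2 by t
  have step1 : ∑ j ∈ Finset.range (n+1), bC j * (1/2:ℚ) ^ j
      ≤ ∑ j ∈ Finset.range (n+1), bC j * t ^ j := by
    refine Finset.sum_le_sum fun j _ => ?_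
    refine mul_le_mul_of_nonneg_left (pow_le_pow_left₀ (by norm_num) (by norm_num) j)
      (bC_nonneg j)
  -- step 2: the t-sum is SS of the product
  have step2 : ∑ j ∈ Finset.range (n+1), bC j * t ^ j = SS n (∏ m ∈ T, gS m) t := by
    rw [SS]
    refine Finset.sum_congr rfl fun j hj => ?_
    rw [Finset.mem_range] at hj
    rw [bC_stable (by omega)]
  -- per-factor bound
  have hfac : ∀ m ∈ T, SS n (gS m) t ≤ 1 + 3 * t ^ m := by
    intro m hm
    obtain ⟨h3, _⟩ := hmem m hm
    have htm : t ^ m ≤ t ^ 3 := pow_le_pow_of_le_one ht0 (le_of_lt ht1) h3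
    have ht3 : t ^ 3 = 2197/15625 := by norm_num [ht_def]
    have hu0 : 0 ≤ t ^ m := pow_nonneg ht0 m
    have hu6 : t ^ m ≤ 1/6 := by rw [ht3] at htm; linarith
    calc SS n (gS m) t ≤ 1 / (1 - 2 * t ^ m) :=
          SS_gS_le (by omega) ht0 (by linarith)
      _ ≤ 1 + 3 * t ^ m := one_div_le_one_add hu0 hu6
  -- sum of 3 t^m over T
  have hsumT : ∑ m ∈ T, 3 * t ^ m ≤ 2197/2500 := by
    have hsub : T ⊆ Finset.Icc 3 n := by
      intro m hm
      obtain ⟨h3, hn'⟩ := hmem m hm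
      rw [Finset.mem_Icc]; exact ⟨h3, hn'⟩
    have h1 : ∑ m ∈ T, 3 * t ^ m ≤ ∑ m ∈ Finset.Icc 3 n, 3 * t ^ m :=
      Finset.sum_le_sum_of_subset_of_nonneg hsub
        (fun m _ _ => by positivity)
    have h2 : ∑ m ∈ Finset.Icc 3 n, 3 * t ^ m ≤ 3 * (t^3 / (1 - t)) := by
      have : Finset.Icc 3 n = Finset.Ico 3 (n+1) := by
        ext m; simp [Finset.mem_Icc, Finset.mem_Ico]
      rw [this, Finset.sum_Ico_eq_sum_range]
      have : ∑ i ∈ Finset.range (n+1-3), 3 * t ^ (3+i)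
          = 3 * t^3 * ∑ i ∈ Finset.range (n+1-3), t ^ i := by
        rw [Finset.mul_sum]
        refine Finset.sum_congr rfl fun i _ => by rw [pow_add]; ring
      rw [this]
      have hgeom : ∑ i ∈ Finset.range (n+1-3), t ^ i ≤ 1/(1-t) :=
        geom_partial_le ht0 ht1 _
      have h3t : (0:ℚ) ≤ 3 * t^3 := by positivity
      calc 3 * t^3 * ∑ i ∈ Finset.range (n+1-3), t ^ i
          ≤ 3 * t^3 * (1/(1-t)) := mul_le_mul_of_nonneg_left hgeom h3t
        _ = 3 * (t^3/(1-t)) := by ring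
    have : 3 * (t^3/(1-t)) = 2197/2500 := by norm_num [ht_def]
    linarith
  have hsumT1 : ∑ m ∈ T, 3 * t ^ m < 1 := lt_of_le_of_lt hsumT (by norm_num)
  -- put it together
  have hprod : ∏ m ∈ T, SS n (gS m) t ≤ 2500/303 := by
    have hp1 : ∏ m ∈ T, SS n (gS m) t ≤ ∏ m ∈ T, (1 + 3 * t ^ m) := by
      refine Finset.prod_le_prod (fun m hm => SS_nonneg (gS_nonneg m) ht0) hfac
    have hp2 : ∏ m ∈ T, (1 + 3 * t ^ m) ≤ 1 / (1 - ∑ m ∈ T, 3 * t ^ m) :=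
      prod_one_add_le (fun m _ => by positivity) hsumT1
    have hp3 : 1 / (1 - ∑ m ∈ T, 3 * t ^ m) ≤ 1 / (1 - 2197/2500) := by
      refine one_div_le_one_div_of_le (by norm_num) (by linarith)
    have : (1:ℚ) / (1 - 2197/2500) = 2500/303 := by norm_num
    linarith
  calc ∑ j ∈ Finset.range (n+1), bC j * (1/2:ℚ) ^ j
      ≤ ∑ j ∈ Finset.range (n+1), bC j * t ^ j := step1
    _ = SS n (∏ m ∈ T, gS m) t := step2
    _ ≤ ∏ m ∈ T, SS n (gS m) t := SS_prod_le ht0 T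
    _ ≤ 2500/303 := hprod


lemma bC_zero : bC 0 = 1 := by
  rw [bC]
  simp

lemma aCoeff_div (n : ℕ) :
    aCoeff n / 2^n = ∑ j ∈ Finset.range (n+1), bC j * (1/2:ℚ) ^ j := by
  rw [aCoeff_sum, Finset.sum_div]
  refine Finset.sum_congr rfl fun j hj => ?_
  rw [Finset.mem_range] at hj
  have hj' : j ≤ n := by omega
  have h2 : (2:ℚ)^(n-j) * 2^j = 2^n := by
    rw [← pow_add]; congr 1; omega
  have hp : (0:ℚ) < 2^j := by positivity
  have hpn : (0:ℚ) < 2^n := by positivity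
  field_simp
  have h3 : (1/2:ℚ)^j * 2^j = 1 := by rw [← mul_pow]; norm_num
  linear_combination (-(bC j) * 2^(n-j)) * h3 + (bC j * (1/2:ℚ)^j) * h2

/-- The coefficients `a'(n)` of
`G(z) = ∏_{n≥1} (1 - 2z^{2n}) / ((1 - 2z^n)(1 - 2z^{4n}))` satisfy `a'(n) ~ α'·2^n`
for some real constant `α' > 0`. -/
theorem aCoeff_asymptotic :
    ∃ α' : ℝ, 0 < α' ∧
      Tendsto (fun n : ℕ => (aCoeff n : ℝ) / 2 ^ n) atTop (nhds α') := by
  set r : ℕ → ℝ := fun m => (bC m : ℝ) * (1/2)^m with hr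
  have hr0 : ∀ m, 0 ≤ r m := fun m => by
    have := bC_nonneg m
    simp only [hr]
    positivity
  have hbound : ∀ N, ∑ j ∈ Finset.range N, r j ≤ 2500/303 := by
    intro N
    rcases Nat.eq_zero_or_pos N with rfl | hN
    · simp; norm_num
    · obtain ⟨n, rfl⟩ := Nat.exists_eq_add_of_le hN
      have := bC_partial_bound n
      have hcast : ((∑ j ∈ Finset.range (n+1), bC j * (1/2:ℚ) ^ j : ℚ) : ℝ)
          = ∑ j ∈ Finset.range (n+1), r j := by
        push_cast [hr]
        norm_num
      calc ∑ j ∈ Finset.range (1+n), r j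
          = ∑ j ∈ Finset.range (n+1), r j := by rw [Nat.add_comm]
        _ ≤ ((2500/303 : ℚ) : ℝ) := by rw [← hcast]; exact_mod_cast this
        _ = 2500/303 := by norm_num
  have hsummable : Summable r := summable_of_sum_range_le hr0 hbound
  refine ⟨∑' m, r m, ?_, ?_⟩
  · have h0 : r 0 ≤ ∑' m, r m := Summable.le_tsum hsummable 0 (fun j _ => hr0 j)
    have : r 0 = 1 := by simp [hr, bC_zero]
    linarith
  · have htend : Tendsto (fun N => ∑ j ∈ Finset.range N, r j) atTop (nhds (∑' m, r m)) :=
      hsummable.hasSum.tendsto_sum_nat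
    have hcomp : Tendsto (fun n : ℕ => ∑ j ∈ Finset.range (n+1), r j) atTop
        (nhds (∑' m, r m)) := htend.comp (tendsto_add_atTop_nat 1)
    refine hcomp.congr fun n => ?_
    have := aCoeff_div n
    have hcast : ((aCoeff n / 2^n : ℚ) : ℝ) = (aCoeff n : ℝ) / 2^n := by push_cast; ring
    rw [← hcast, this]
    push_cast [hr]
    norm_num
end

section
/- For any word map given by W(g) = g^2 on the simple groups G_n = GL_n(GF(2)) (n ≥ 3), the number b(n) of squares in GL_n(GF(2)) satisfies log b(n) / log |GL_n(GF(2))| → 1 as n → ∞; in particular, for every ε > 0 there is N such that b(n) ≥ |GL_n(GF(2))|^{1-ε} = Θ(2^{(1-ε)n^2}) for all n ≥ N. -/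
open Filter

set_option maxHeartbeats 1000000
set_option synthInstance.maxHeartbeats 400000

/-- Squares count is invariant under group isomorphism. -/
private lemma sqCount_congr {G H : Type*} [Group G] [Group H] (e : G ≃* H) :
    Nat.card {A : G // ∃ B : G, B ^ 2 = A} = Nat.card {A : H // ∃ B : H, B ^ 2 = A} :=
  Nat.card_congr <| e.toEquiv.subtypeEquiv fun a => by
    constructor
    · rintro ⟨B, rfl⟩; exact ⟨e B, by rw [← map_pow]; rfl⟩
    · rintro ⟨B, hB⟩
      refine ⟨e.symm B, ?_⟩
      have := congrArg e.symm hB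
      rw [map_pow] at this
      simpa using this

/-- Orbit–stabilizer based lower bound for the number of squares. -/
private lemma card_le_sqCount_mul {G : Type*} [Group G] [Finite G] (g : G)
    (hsq : ∃ b : G, b ^ 2 = g) {m : ℕ}
    (hstab : Nat.card (MulAction.stabilizer (ConjAct G) g) ≤ m) :
    Nat.card G ≤ Nat.card {A : G // ∃ B : G, B ^ 2 = A} * m := by
  classical
  have : Fintype G := Fintype.ofFinite G
  have horb := MulAction.card_orbit_mul_card_stabilizer_eq_card_group (ConjAct G) g
  have hsub : MulAction.orbit (ConjAct G) g ⊆ {A : G | ∃ B : G, B ^ 2 = A} := by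
    rintro x ⟨c, rfl⟩
    obtain ⟨b, rfl⟩ := hsq
    refine ⟨ConjAct.ofConjAct c * b * (ConjAct.ofConjAct c)⁻¹, ?_⟩
    simp only [ConjAct.smul_def, pow_two]
    group
  have h1 : Nat.card ↥(MulAction.orbit (ConjAct G) g) ≤
      Nat.card {A : G // ∃ B : G, B ^ 2 = A} := by
    rw [Nat.card_coe_set_eq, show {A : G // ∃ B : G, B ^ 2 = A} =
      ↥{A : G | ∃ B : G, B ^ 2 = A} from rfl, Nat.card_coe_set_eq]
    exact Set.ncard_le_ncard hsub (Set.toFinite _)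
  have hG : Nat.card G = Nat.card ↥(MulAction.orbit (ConjAct G) g) *
      Nat.card (MulAction.stabilizer (ConjAct G) g) := by
    simp only [Nat.card_eq_fintype_card]
    rw [horb]
    rfl
  rw [hG]
  exact Nat.mul_le_mul h1 hstab

private lemma main_count (n : ℕ) (hn : 1 ≤ n) :
    Nat.card (GL (Fin n) (ZMod 2)) ≤
      Nat.card {A : GL (Fin n) (ZMod 2) // ∃ B : GL (Fin n) (ZMod 2), B ^ 2 = A} * 2 ^ n := by
  classical
  set K := GaloisField 2 n with hK
  letI : Finite (Module.End (ZMod 2) K) :=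
    Finite.of_injective (fun f => (f : K → K)) DFunLike.coe_injective
  have hn0 : n ≠ 0 := by omega
  have hcardK : Nat.card K = 2 ^ n := GaloisField.card 2 n hn0
  have hrank : Module.finrank (ZMod 2) K = n := GaloisField.finrank 2 hn0
  let b : Module.Basis (Fin n) (ZMod 2) K := (Module.finBasis (ZMod 2) K).reindex (finCongr hrank)
  let e : Module.End (ZMod 2) K ≃ₐ[ZMod 2] Matrix (Fin n) (Fin n) (ZMod 2) :=
    LinearMap.toMatrixAlgEquiv b
  let eU : (Module.End (ZMod 2) K)ˣ ≃* GL (Fin n) (ZMod 2) :=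
    Units.mapEquiv e.toRingEquiv.toMulEquiv
  obtain ⟨α, hα⟩ := IsCyclic.exists_generator (α := Kˣ)
  let u : (Module.End (ZMod 2) K)ˣ :=
    Units.map (Algebra.lmul (ZMod 2) K).toMonoidHom α
  -- u has odd order
  have hcardKu : Nat.card Kˣ = 2 ^ n - 1 := by rw [Nat.card_units, hcardK]
  have hαpow : α ^ (2 ^ n - 1) = 1 := by rw [← hcardKu]; exact pow_card_eq_one'
  have hupow : u ^ (2 ^ n - 1) = 1 := by
    rw [← map_pow, hαpow, map_one]
  have hodd : 2 ^ n - 1 = 2 * (2 ^ (n - 1) - 1) + 1 := by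
    have h1 : 1 ≤ 2 ^ (n - 1) := Nat.one_le_two_pow
    have : 2 ^ n = 2 * 2 ^ (n - 1) := by
      conv_lhs => rw [show n = 1 + (n - 1) by omega]
      rw [pow_add, pow_one]
    omega
  have hsq : ∃ c : (Module.End (ZMod 2) K)ˣ, c ^ 2 = u := by
    refine ⟨u ^ (2 ^ (n - 1) - 1 + 1), ?_⟩
    rw [← pow_mul]
    have : (2 ^ (n - 1) - 1 + 1) * 2 = (2 * (2 ^ (n - 1) - 1) + 1) + 1 := by ring
    rw [this, ← hodd]
    rw [pow_succ, hupow, one_mul]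
  -- stabilizer bound
  have hstab : Nat.card (MulAction.stabilizer (ConjAct (Module.End (ZMod 2) K)ˣ) u) ≤ 2 ^ n := by
    rw [← hcardK]
    refine Nat.card_le_card_of_injective
      (fun c => ((ConjAct.ofConjAct c.val : (Module.End (ZMod 2) K)ˣ) : Module.End (ZMod 2) K) 1)
      ?_
    rintro ⟨c, hc⟩ ⟨c', hc'⟩ hcc
    -- each stabilizer element C satisfies C x = x * C 1
    have key : ∀ d : ConjAct (Module.End (ZMod 2) K)ˣ,
        d ∈ MulAction.stabilizer (ConjAct (Module.End (ZMod 2) K)ˣ) u →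
        ∀ x : K, ((ConjAct.ofConjAct d : (Module.End (ZMod 2) K)ˣ) : Module.End (ZMod 2) K) x
          = x * ((ConjAct.ofConjAct d : (Module.End (ZMod 2) K)ˣ) : Module.End (ZMod 2) K) 1 := by
      intro d hd x
      set C : Module.End (ZMod 2) K :=
        ((ConjAct.ofConjAct d : (Module.End (ZMod 2) K)ˣ) : Module.End (ZMod 2) K) with hC
      have hcomm : ∀ y : K, C ((α : K) * y) = (α : K) * C y := by
        intro y
        have hd' : ConjAct.ofConjAct d * u = u * ConjAct.ofConjAct d := by
          have h := hd
          rw [MulAction.mem_stabilizer_iff, ConjAct.smul_def] at h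
          exact mul_inv_eq_iff_eq_mul.mp h
        have := congrArg (fun w : (Module.End (ZMod 2) K)ˣ => (w : Module.End (ZMod 2) K) y) hd'
        simp only [Units.val_mul, Module.End.mul_apply] at this
        have hu : ∀ z : K, ((u : Module.End (ZMod 2) K)) z = (α : K) * z := fun z => rfl
        rw [hu, hu] at this
        exact this
      have hpow : ∀ m : ℕ, C ((α : K) ^ m) = (α : K) ^ m * C 1 := by
        intro m
        induction m with
        | zero => simp
        | succ m ih =>
            rw [pow_succ']
            rw [hcomm, ih, mul_assoc]
      rcases eq_or_ne x 0 with rfl | hx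
      · simp
      · obtain ⟨m, hm⟩ := mem_powers_iff_mem_zpowers.mpr (hα (Units.mk0 x hx))
        have hxm : (α : K) ^ m = x := by
          have := congrArg (Units.val) hm
          simpa using this
        rw [← hxm]
        exact hpow m
    simp only [Subtype.mk.injEq]
    have h1 := key c hc
    have h2 := key c' hc'
    have : ConjAct.ofConjAct c = ConjAct.ofConjAct c' := by
      ext x
      rw [h1 x, h2 x]
      exact congrArg (fun t => x * t) hcc
    exact ConjAct.ofConjAct.injective this
  have hfin : Finite (Module.End (ZMod 2) K)ˣ := by infer_instance
  have hmain := card_le_sqCount_mul u hsq hstab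
  rwa [Nat.card_congr eU.toEquiv, sqCount_congr eU] at hmain

private lemma cardGL_le (n : ℕ) : Nat.card (GL (Fin n) (ZMod 2)) ≤ 2 ^ (n * n) := by
  rw [Matrix.card_GL_field]
  calc ∏ i : Fin n, (Fintype.card (ZMod 2) ^ n - Fintype.card (ZMod 2) ^ (i : ℕ))
      ≤ ∏ _i : Fin n, 2 ^ n := by
        refine Finset.prod_le_prod' fun i _ => ?_
        simp [ZMod.card]
    _ = 2 ^ (n * n) := by
        rw [Finset.prod_const, Finset.card_univ, Fintype.card_fin, ← pow_mul, mul_comm]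

private lemma cardGL_ge (n : ℕ) : 2 ^ (n * (n - 1)) ≤ Nat.card (GL (Fin n) (ZMod 2)) := by
  rw [Matrix.card_GL_field]
  calc (2 : ℕ) ^ (n * (n - 1)) = ∏ _i : Fin n, 2 ^ (n - 1) := by
        rw [Finset.prod_const, Finset.card_univ, Fintype.card_fin, ← pow_mul, mul_comm]
    _ ≤ ∏ i : Fin n, (Fintype.card (ZMod 2) ^ n - Fintype.card (ZMod 2) ^ (i : ℕ)) := by
        refine Finset.prod_le_prod' fun i _ => ?_
        have hi : (i : ℕ) ≤ n - 1 := by omega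
        have h1 : (2:ℕ) ^ (i:ℕ) ≤ 2 ^ (n-1) := Nat.pow_le_pow_right (by norm_num) hi
        have hn : 0 < n := i.pos
        have h2 : (2:ℕ) ^ (n-1) * 2 = 2 ^ n := by
          rw [← pow_succ]; congr 1; omega
        simp only [ZMod.card]
        omega

private lemma bCount_pos' (n : ℕ) :
    1 ≤ Nat.card {A : GL (Fin n) (ZMod 2) // ∃ B : GL (Fin n) (ZMod 2), B ^ 2 = A} := by
  have : Nonempty {A : GL (Fin n) (ZMod 2) // ∃ B : GL (Fin n) (ZMod 2), B ^ 2 = A} :=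
    ⟨⟨1, 1, one_pow 2⟩⟩
  exact Nat.one_le_iff_ne_zero.mpr (Nat.card_ne_zero.mpr ⟨this, inferInstance⟩)


private lemma bCount_le (n : ℕ) :
    Nat.card {A : GL (Fin n) (ZMod 2) // ∃ B : GL (Fin n) (ZMod 2), B ^ 2 = A} ≤
      Nat.card (GL (Fin n) (ZMod 2)) :=
  Nat.card_le_card_of_injective Subtype.val Subtype.val_injective

private lemma analysis (n : ℕ) (hn : 2 ≤ n) :
    (0 < Real.log (Nat.card (GL (Fin n) (ZMod 2)))) ∧
    (1 - 1/((n:ℝ)-1) ≤ Real.log (Nat.card {A : GL (Fin n) (ZMod 2) // ∃ B : GL (Fin n) (ZMod 2), B ^ 2 = A}) /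
        Real.log (Nat.card (GL (Fin n) (ZMod 2)))) ∧
    (Real.log (Nat.card {A : GL (Fin n) (ZMod 2) // ∃ B : GL (Fin n) (ZMod 2), B ^ 2 = A}) /
        Real.log (Nat.card (GL (Fin n) (ZMod 2))) ≤ 1) := by
  set Nc := Nat.card (GL (Fin n) (ZMod 2)) with hNc
  set bc := Nat.card {A : GL (Fin n) (ZMod 2) // ∃ B : GL (Fin n) (ZMod 2), B ^ 2 = A} with hbc
  set L := Real.log Nc with hL
  set B := Real.log bc with hB
  have hb1 : 1 ≤ bc := bCount_pos' n
  have hbN : bc ≤ Nc := bCount_le n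
  have hbpos : (0:ℝ) < bc := by exact_mod_cast hb1
  have hNreal : ((2:ℝ))^(n*(n-1)) ≤ (Nc:ℝ) := by
    exact_mod_cast cardGL_ge n
  have hNpos : (0:ℝ) < Nc := lt_of_lt_of_le (by positivity) hNreal
  have hlog2 : (0:ℝ) < Real.log 2 := Real.log_pos (by norm_num)
  have hcast : ((n - 1 : ℕ) : ℝ) = (n:ℝ) - 1 := by
    rw [Nat.cast_sub (by omega : 1 ≤ n)]; norm_num
  have hn2 : (2:ℝ) ≤ (n:ℝ) := by exact_mod_cast hn
  have ht : (0:ℝ) < (n:ℝ) - 1 := by linarith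
  have hLge : (n:ℝ) * ((n:ℝ)-1) * Real.log 2 ≤ L := by
    have := Real.log_le_log (by positivity) hNreal
    rw [Real.log_pow] at this
    rw [hL]
    calc (n:ℝ) * ((n:ℝ)-1) * Real.log 2 = ((n*(n-1) : ℕ) : ℝ) * Real.log 2 := by
          push_cast [hcast]; ring
      _ ≤ Real.log Nc := this
  have hLpos : 0 < L := by
    have h0 : 0 < (n:ℝ)*((n:ℝ)-1)*Real.log 2 :=
      mul_pos (mul_pos (by linarith) ht) hlog2
    linarith
  have hBle : B ≤ L := Real.log_le_log hbpos (by exact_mod_cast hbN)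
  have hkey : L ≤ B + (n:ℝ) * Real.log 2 := by
    have hc := main_count n (by omega)
    have hcr : (Nc:ℝ) ≤ (bc:ℝ) * (2:ℝ)^n := by exact_mod_cast hc
    have := Real.log_le_log hNpos hcr
    rw [Real.log_mul (ne_of_gt hbpos) (by positivity), Real.log_pow] at this
    rw [hL, hB]
    exact this
  refine ⟨hLpos, ?_, ?_⟩
  · rw [le_div_iff₀ hLpos]
    have h5 : (n:ℝ) * Real.log 2 ≤ L / ((n:ℝ)-1) := by
      rw [le_div_iff₀ ht]
      nlinarith
    have e1 : (1 - 1/((n:ℝ)-1)) * L = L - L/((n:ℝ)-1) := by ring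
    rw [e1]
    linarith
  · rw [div_le_one hLpos]
    exact hBle


/-- The number of squares in `GL_n(GF(2))`. -/
noncomputable def bCount (n : ℕ) : ℕ :=
  Nat.card {A : GL (Fin n) (ZMod 2) // ∃ B : GL (Fin n) (ZMod 2), B ^ 2 = A}

/-- For the word map `g ↦ g^2` on the simple groups `GL_n(GF(2))`, the number `b(n)` of
squares in `GL_n(GF(2))` satisfies `log b(n) / log |GL_n(GF(2))| → 1` as `n → ∞`; in
particular, for every `ε > 0` there is `N` such that
`b(n) ≥ |GL_n(GF(2))|^{1-ε}` for all `n ≥ N`. -/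
theorem log_bCount_ratio_tendsto_one :
    Tendsto (fun n : ℕ =>
        Real.log (bCount n) / Real.log (Nat.card (GL (Fin n) (ZMod 2))))
      atTop (nhds 1) ∧
    ∀ ε : ℝ, 0 < ε → ∃ N : ℕ, ∀ n ≥ N,
      ((Nat.card (GL (Fin n) (ZMod 2)) : ℝ)) ^ ((1 : ℝ) - ε) ≤ (bCount n : ℝ) := by
  have htend : Tendsto (fun n : ℕ =>
      Real.log (bCount n) / Real.log (Nat.card (GL (Fin n) (ZMod 2))))
      atTop (nhds 1) := by
    have h1 : Tendsto (fun n : ℕ => (n:ℝ) - 1) atTop atTop := by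
      simpa [sub_eq_add_neg] using
        tendsto_atTop_add_const_right atTop (-1:ℝ) tendsto_natCast_atTop_atTop
    have h2 : Tendsto (fun n : ℕ => 1 - 1/((n:ℝ)-1)) atTop (nhds 1) := by
      have h3 := h1.inv_tendsto_atTop
      have h4 := tendsto_const_nhds (x := (1:ℝ)) (f := atTop (α := ℕ)) |>.sub h3
      simpa [one_div] using h4
    refine tendsto_of_tendsto_of_tendsto_of_le_of_le' h2 tendsto_const_nhds ?_ ?_
    · filter_upwards [eventually_ge_atTop 2] with n hn
      exact (analysis n hn).2.1
    · filter_upwards [eventually_ge_atTop 2] with n hn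
      exact (analysis n hn).2.2
  refine ⟨htend, fun ε hε => ?_⟩
  have hev : ∀ᶠ n : ℕ in atTop, 1 - ε ≤
      Real.log (bCount n) / Real.log (Nat.card (GL (Fin n) (ZMod 2))) :=
    htend.eventually_const_le (by linarith)
  obtain ⟨N, hN⟩ := (hev.and (eventually_ge_atTop 2)).exists_forall_of_atTop
  refine ⟨N, fun n hn => ?_⟩
  obtain ⟨hr, hn2⟩ := hN n hn
  obtain ⟨hLpos, -, -⟩ := analysis n hn2
  have hNpos : (0:ℝ) < (Nat.card (GL (Fin n) (ZMod 2)) : ℝ) := by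
    have := cardGL_ge n
    have : (1:ℕ) ≤ Nat.card (GL (Fin n) (ZMod 2)) := le_trans (Nat.one_le_two_pow) this
    exact_mod_cast Nat.lt_of_lt_of_le Nat.zero_lt_one this
  have hbpos : (0:ℝ) < (bCount n : ℝ) := by
    have := bCount_pos' n
    exact_mod_cast Nat.lt_of_lt_of_le Nat.zero_lt_one this
  have hmul : (1 - ε) * Real.log (Nat.card (GL (Fin n) (ZMod 2))) ≤
      Real.log (bCount n) := (le_div_iff₀ hLpos).mp hr
  calc ((Nat.card (GL (Fin n) (ZMod 2)) : ℝ)) ^ ((1 : ℝ) - ε)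
      = Real.exp (((1:ℝ) - ε) * Real.log (Nat.card (GL (Fin n) (ZMod 2)))) := by
        rw [Real.rpow_def_of_pos hNpos, mul_comm]
    _ ≤ Real.exp (Real.log (bCount n)) := Real.exp_le_exp.mpr hmul
    _ = (bCount n : ℝ) := Real.exp_log hbpos
end
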